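/- arXiv:1801.05335 — 3 statements merged into one kernel-verified Lean document; each statement's English description precedes it below -/
import Mathlib

section
/- Let Ω_0 = {(g_0,g_1,…) ∈ Ω : g_0 ∈ S_0} and let P_{Ω_0} be P_Ω conditioned on Ω_0. Then the pushforward of P_{Ω_0} under the projection π equals the normalized Lebesgue measure m on Y: π_* P_{Ω_0} = m. -/
open MeasureTheory ProbabilityTheory Filter Asymptotics
open scoped ENNReal NNReal Classical

/-- `f` is the Liverani–Saussol–Vaienti map with parameter `γ`. -/
def IsLSV (γ : ℝ) (f : ℝ → ℝ) : Prop :=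
  ∀ x : ℝ, f x = if x ≤ 1 / 2 then x * (1 + 2 ^ γ * x ^ γ) else 2 * x - 1

/-- `f` is a Holland–Gouëzel-type map with parameter `γ`. -/
def IsHG (γ : ℝ) (f : ℝ → ℝ) : Prop :=
  ∃ ρ : ℝ → ℝ,
    ContDiffOn ℝ 2 ρ (Set.Ioc (0 : ℝ) (1 / 2)) ∧
    (∀ x ∈ Set.Ioc (0 : ℝ) (1 / 2), 0 < ρ x) ∧
    (∀ c : ℝ, 0 < c →
      Tendsto (fun x => ρ (c * x) / ρ x) (nhdsWithin 0 (Set.Ioi 0)) (nhds 1)) ∧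
    (fun x => x * deriv ρ x) =o[nhdsWithin 0 (Set.Ioi 0)] ρ ∧
    (fun x => x ^ 2 * deriv (deriv ρ) x) =o[nhdsWithin 0 (Set.Ioi 0)] ρ ∧
    f (1 / 2) = 1 ∧
    (∀ x ∈ Set.Ioc (0 : ℝ) (1 / 2), 1 < deriv f x) ∧
    IntegrableOn (fun x => 1 / (x * (ρ x) ^ (1 / γ))) (Set.Ioc (0 : ℝ) (1 / 2)) ∧
    ∀ x : ℝ, f x = if x ≤ 1 / 2 then x * (1 + x ^ γ * ρ x) else 2 * x - 1

/-- The reference set `Y = (1/2, 1]`. -/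
def Yset : Set ℝ := Set.Ioc (1 / 2) 1

/-- The normalized Lebesgue measure on `Y`. -/
noncomputable def mY : Measure ℝ := (volume Yset)⁻¹ • volume.restrict Yset

/-- The first return time to `Y` under `f`. -/
noncomputable def rtime (f : ℝ → ℝ) (x : ℝ) : ℕ :=
  sInf {n : ℕ | 1 ≤ n ∧ f^[n] x ∈ Yset}

/-- The induced (first return) map `F = f^τ` on `Y`. -/
noncomputable def indmap (f : ℝ → ℝ) (x : ℝ) : ℝ :=
  f^[rtime f x] x

/-- The partition `α` of `Y` into the (nonempty) level sets of the return time `τ`. -/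
def partAlpha (f : ℝ → ℝ) : Set (Set ℝ) :=
  {s | ∃ k : ℕ, 1 ≤ k ∧ s = {x ∈ Yset | rtime f x = k} ∧ s.Nonempty}

/-- The set `A` of nonempty finite words in the alphabet `α`. -/
def Words (f : ℝ → ℝ) : Type :=
  {w : List (Set ℝ) // w ≠ [] ∧ ∀ s ∈ w, s ∈ partAlpha f}

/-- The cylinder `Y_w` associated with a word `w`. -/
def Yword (f : ℝ → ℝ) (w : List (Set ℝ)) : Set ℝ :=
  {y | ∀ k < w.length, (indmap f)^[k] y ∈ w.getD k ∅}

/-- `h(w) = τ(a₀) + ⋯ + τ(a_{n-1})`: the total return time of the word `w`. -/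
noncomputable def hof (f : ℝ → ℝ) (w : List (Set ℝ)) : ℕ :=
  (w.map fun s => sInf (rtime f '' s)).sum

/-- The state space `S = {(w, ℓ) : w ∈ A, 0 ≤ ℓ < h(w)}` of the Markov chain. -/
def MCState (f : ℝ → ℝ) : Type :=
  {p : Words f × ℕ // p.2 < hof f p.1.1}

noncomputable instance (f : ℝ → ℝ) : MeasurableSpace (MCState f) := ⊤

/-- The word component of a state. -/
def wordOf {f : ℝ → ℝ} (s : MCState f) : Words f := s.1.1

/-- The level component of a state. -/
def levOf {f : ℝ → ℝ} (s : MCState f) : ℕ := s.1.2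

/-- The transition probabilities of the Markov chain: climb the tower
deterministically, and from the top of the tower over `w` jump to `(w', 0)` with
probability `P_A(w')`. -/
noncomputable def mcTrans (f : ℝ → ℝ) (PA : Words f → ℝ≥0∞)
    (s t : MCState f) : ℝ≥0∞ :=
  if wordOf t = wordOf s ∧ levOf t = levOf s + 1 ∧ levOf s + 1 < hof f (wordOf s).1 then 1
  else if levOf s + 1 = hof f (wordOf s).1 ∧ levOf t = 0 then PA (wordOf t)
  else 0

/-- The invariant distribution `ν(w, ℓ) = P_A(w)/E_{P_A}(h)` of the chain. -/
noncomputable def mcNu (f : ℝ → ℝ) (PA : Words f → ℝ≥0∞) (s : MCState f) : ℝ≥0∞ :=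
  PA (wordOf s) / ∑' w : Words f, (hof f w.1 : ℝ≥0∞) * PA w

/-- Admissible (positive-probability) transitions. -/
def mcAdm (f : ℝ → ℝ) (s t : MCState f) : Prop :=
  (wordOf t = wordOf s ∧ levOf t = levOf s + 1 ∧ levOf s + 1 < hof f (wordOf s).1) ∨
  (levOf s + 1 = hof f (wordOf s).1 ∧ levOf t = 0)

/-- The space `Ω` of admissible trajectories of the chain. -/
def mcTraj (f : ℝ → ℝ) : Set (ℕ → MCState f) :=
  {x | ∀ n : ℕ, mcAdm f (x n) (x (n + 1))}

/-- The base `S₀ = {(w, 0)}` of the tower. -/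
def mcBase (f : ℝ → ℝ) : Set (MCState f) :=
  {s | levOf s = 0}

/-- The separation time `s(x,y)`: the number of visits of `x` to the base `S₀` before
`x` and `y` separate. -/
noncomputable def mcSep {f : ℝ → ℝ} (x y : ℕ → MCState f) : ℕ :=
  {n : ℕ | n < sInf {m : ℕ | x m ≠ y m} ∧ x n ∈ mcBase f}.ncard

/-- The subset `X_g = f^ℓ(Y_w)` of `[0,1]` attached to the state `g = (w, ℓ)`. -/
def mcX (f : ℝ → ℝ) (s : MCState f) : Set ℝ :=
  f^[levOf s] '' Yword f (wordOf s).1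

/-! Both `m` and the law `μ` of `π` under the conditioned chain are regenerative: each is a sum
over words `w` of a measure of mass `P_A(w)` carried by the cylinder `Y_w` and sent by `F^{|w|}`
to `P_A(w)` times the measure itself. For `μ` this is the strong Markov property of the chain at
its first return to the base, together with `π ∘ shift^{h(w)} = F^{|w|} ∘ π` on the tower over `w`.
Splitting off the first word expresses the measure of a cylinder through shorter cylinders, so
`μ` and `m` agree on all cylinders. As `F` expands, cylinders shrink, and away from the common
null set of points with a finite itinerary every open set is a countable union of cylinders;
hence `μ = m`. -/

open Set

theorem measurable_sInf_setOf_nat {α : Type*} [MeasurableSpace α] {p : ℕ → α → Prop}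
    (hp : ∀ n, MeasurableSet {x | p n x}) : Measurable fun x => sInf {n | p n x} := by
  -- `Nat.find` needs a witness for every `x`, so the empty case is sent to `0` by hand
  have hex (x : α) : ∃ n, p n x ∨ (n = 0 ∧ ∀ m, ¬ p m x) := by
    by_cases h : ∃ n, p n x
    · obtain ⟨n, hn⟩ := h
      exact ⟨n, .inl hn⟩
    · exact ⟨0, .inr ⟨rfl, not_exists.1 h⟩⟩
  have heq : (fun x => sInf {n | p n x}) = fun x => Nat.find (hex x) := by
    funext x
    by_cases h : ∃ n, p n x
    · refine le_antisymm (Nat.sInf_le ?_) (Nat.find_min' _ (.inl (Nat.sInf_mem h)))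
      obtain ⟨n, hn⟩ := h
      exact (Nat.find_spec (hex x)).resolve_right fun h' => h'.2 n hn
    · have hempty : {n | p n x} = ∅ := eq_empty_of_forall_notMem (not_exists.1 h)
      rw [hempty, Nat.sInf_empty, eq_comm, Nat.find_eq_zero]
      exact .inr ⟨rfl, not_exists.1 h⟩
  rw [heq]
  refine measurable_find hex fun k => ?_
  simp only [ofPred_or, ofPred_and, ofPred_forall]
  exact (hp k).union ((MeasurableSet.const _).inter (.iInter fun m => (hp m).compl))

theorem MeasureTheory.Measure.ext_of_isPiSystem_of_isOpen_inter {α : Type*}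
    [TopologicalSpace α] [MeasurableSpace α] [BorelSpace α] {μ ν : Measure α} [IsFiniteMeasure μ]
    {C : Set (Set α)} (hC : IsPiSystem C) (hCm : ∀ s ∈ C, MeasurableSet s)
    (hμν : ∀ s ∈ C, μ s = ν s) (huniv : μ univ = ν univ) {G : Set α}
    (hG : MeasurableSet[MeasurableSpace.generateFrom C] G) (hμG : μ Gᶜ = 0)
    (hopen : ∀ U, IsOpen U → MeasurableSet[MeasurableSpace.generateFrom C] (U ∩ G)) :
    μ = ν := by
  have hle : MeasurableSpace.generateFrom C ≤ ‹MeasurableSpace α› :=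
    MeasurableSpace.generateFrom_le hCm
  have hgen {s : Set α} (hs : MeasurableSet[MeasurableSpace.generateFrom C] s) : μ s = ν s :=
    ext_on_measurableSpace_of_generate_finite _ C hμν hle rfl hC huniv hs
  have : IsFiniteMeasure ν := ⟨huniv ▸ measure_lt_top μ univ⟩
  have hνG : ν Gᶜ = 0 := by
    rw [measure_compl (hle _ hG) (measure_ne_top _ _), ← huniv, ← hgen hG,
      ← measure_compl (hle _ hG) (measure_ne_top _ _), hμG]
  refine ext_of_generate_finite _ (BorelSpace.measurable_eq.trans rfl) isPiSystem_isOpen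
    (fun U hU => ?_) huniv
  rw [← measure_inter_conull hμG, hgen (hopen U hU), measure_inter_conull hνG]

section Sequences

variable {S : Type*}

def initialCylinder (n : ℕ) (c : ℕ → S) : Set (ℕ → S) := {y | ∀ k ≤ n, y k = c k}

def seqShift (H : ℕ) (y : ℕ → S) : ℕ → S := fun n => y (n + H)

def seqAppend (H : ℕ) (a c : ℕ → S) : ℕ → S := fun j => if j < H then a j else c (j - H)

lemma mem_initialCylinder_zero {c y : ℕ → S} : y ∈ initialCylinder 0 c ↔ y 0 = c 0 :=
  ⟨fun h => h 0 le_rfl, fun h _ hk => Nat.le_zero.1 hk ▸ h⟩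

lemma initialCylinder_inter_preimage_seqShift {H : ℕ} (hH : 0 < H) (a c : ℕ → S) (n : ℕ) :
    initialCylinder (H - 1) a ∩ seqShift H ⁻¹' initialCylinder n c
      = initialCylinder (H + n) (seqAppend H a c) := by
  ext y
  simp only [initialCylinder, seqShift, seqAppend, mem_inter_iff, mem_preimage, mem_ofPred_eq]
  constructor
  · rintro ⟨ha, hc⟩ k hk
    by_cases hkH : k < H
    · rw [if_pos hkH, ha k (by omega)]
    · rw [if_neg hkH, ← hc (k - H) (by omega), Nat.sub_add_cancel (not_lt.1 hkH)]
  · intro h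
    refine ⟨fun k hk => by rw [h k (by omega), if_pos (by omega)], fun k hk => ?_⟩
    rw [h (k + H) (by omega), if_neg (by omega), Nat.add_sub_cancel]

lemma isPiSystem_initialCylinder :
    IsPiSystem {A : Set (ℕ → S) | ∃ n c, A = initialCylinder n c} := by
  have nested {m n : ℕ} (c d : ℕ → S) (hmn : m ≤ n)
      (hne : (initialCylinder m c ∩ initialCylinder n d).Nonempty) :
      initialCylinder m c ∩ initialCylinder n d = initialCylinder n d := by
    obtain ⟨y, hyc, hyd⟩ := hne
    refine inter_eq_self_of_subset_right fun z hz k hk => ?_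
    rw [hz k (hk.trans hmn), ← hyd k (hk.trans hmn), hyc k hk]
  rintro _ ⟨m, c, rfl⟩ _ ⟨n, d, rfl⟩ hne
  rcases le_total m n with hmn | hnm
  · exact ⟨n, d, nested c d hmn hne⟩
  · rw [inter_comm] at hne ⊢
    exact ⟨m, c, nested d c hnm hne⟩

variable [MeasurableSpace S]

lemma measurable_seqShift (H : ℕ) : Measurable (seqShift (S := S) H) :=
  measurable_pi_lambda _ fun n => measurable_pi_apply (n + H)

lemma measurableSet_initialCylinder [MeasurableSingletonClass S] (n : ℕ) (c : ℕ → S) :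
    MeasurableSet (initialCylinder n c) := by
  have : initialCylinder n c = ⋂ k ∈ Iic n, (fun y : ℕ → S => y k) ⁻¹' {c k} := by
    ext y
    simp [initialCylinder]
  rw [this]
  exact .biInter (to_countable _) fun k _ => measurable_pi_apply k (measurableSet_singleton _)

lemma pi_eq_generateFrom_initialCylinder [Countable S] [MeasurableSingletonClass S] :
    (MeasurableSpace.pi : MeasurableSpace (ℕ → S))
      = MeasurableSpace.generateFrom {A | ∃ n c, A = initialCylinder n c} := by
  set gen := MeasurableSpace.generateFrom {A : Set (ℕ → S) | ∃ n c, A = initialCylinder n c}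
  refine le_antisymm ?_ (MeasurableSpace.generateFrom_le ?_)
  · -- the fibres of the first `n + 1` coordinates are cylinders
    have hprefix (n : ℕ) : Measurable[gen] fun (y : ℕ → S) (k : Fin (n + 1)) => y k := by
      refine @measurable_to_countable' _ _ _ _ gen _ fun d => ?_
      rcases eq_empty_or_nonempty ((fun (y : ℕ → S) (k : Fin (n + 1)) => y k) ⁻¹' {d})
        with hempty | ⟨y₀, hy₀⟩
      · rw [hempty]
        exact @MeasurableSet.empty _ gen
      · refine MeasurableSpace.measurableSet_generateFrom ⟨n, y₀, ?_⟩
        ext y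
        simp only [mem_preimage, mem_singleton_iff] at hy₀ ⊢
        rw [← hy₀, funext_iff]
        exact ⟨fun h k hk => h ⟨k, Nat.lt_succ_of_le hk⟩, fun h k => h k (Nat.le_of_lt_succ k.2)⟩
    exact iSup_le fun i => ((measurable_pi_apply (Fin.last i)).comp (hprefix i)).comap_le
  · rintro _ ⟨n, c, rfl⟩
    exact measurableSet_initialCylinder n c

end Sequences

section Cylinders

variable {f : ℝ → ℝ}

lemma abs_sub_le_one_of_mem_Yset {x y : ℝ} (hx : x ∈ Yset) (hy : y ∈ Yset) : |x - y| ≤ 1 := by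
  obtain ⟨hx₁, hx₂⟩ := hx
  obtain ⟨hy₁, hy₂⟩ := hy
  rw [abs_sub_le_iff]
  constructor <;> linarith

lemma measurable_rtime (hfm : Measurable f) : Measurable (rtime f) :=
  measurable_sInf_setOf_nat fun n =>
    (MeasurableSet.const (1 ≤ n)).inter (hfm.iterate n measurableSet_Ioc)

lemma measurable_indmap (hfm : Measurable f) : Measurable (indmap f) := by
  have hjoint : Measurable fun p : ℝ × ℕ => f^[p.2] p.1 :=
    measurable_from_prod_countable_left fun n => hfm.iterate n
  exact hjoint.comp (measurable_id.prodMk (measurable_rtime hfm))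

lemma sInf_rtime_image_eq {k : ℕ} (hne : {x | x ∈ Yset ∧ rtime f x = k}.Nonempty) :
    sInf (rtime f '' {x | x ∈ Yset ∧ rtime f x = k}) = k := by
  rw [(hne.image _).subset_singleton_iff.1 (image_subset_iff.2 fun x hx => hx.2),
    csInf_singleton]

lemma eq_setOf_rtime_of_mem_partAlpha {a : Set ℝ} (ha : a ∈ partAlpha f) :
    a = {x | x ∈ Yset ∧ rtime f x = sInf (rtime f '' a)} := by
  obtain ⟨k, -, rfl, hne⟩ := ha
  rw [sInf_rtime_image_eq hne]

lemma one_le_sInf_rtime_image {a : Set ℝ} (ha : a ∈ partAlpha f) : 1 ≤ sInf (rtime f '' a) := by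
  obtain ⟨k, hk, rfl, hne⟩ := ha
  rwa [sInf_rtime_image_eq hne]

lemma rtime_eq_of_mem_partAlpha {a : Set ℝ} (ha : a ∈ partAlpha f) {x : ℝ} (hx : x ∈ a) :
    rtime f x = sInf (rtime f '' a) := by
  rw [eq_setOf_rtime_of_mem_partAlpha ha] at hx
  exact hx.2

lemma subset_Yset_of_mem_partAlpha {a : Set ℝ} (ha : a ∈ partAlpha f) : a ⊆ Yset := by
  rw [eq_setOf_rtime_of_mem_partAlpha ha]
  exact fun x hx => hx.1

lemma disjoint_of_mem_partAlpha {a b : Set ℝ} (ha : a ∈ partAlpha f) (hb : b ∈ partAlpha f)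
    (hab : a ≠ b) : Disjoint a b := by
  refine disjoint_left.2 fun x hxa hxb => hab ?_
  rw [eq_setOf_rtime_of_mem_partAlpha ha, eq_setOf_rtime_of_mem_partAlpha hb,
    ← rtime_eq_of_mem_partAlpha ha hxa, ← rtime_eq_of_mem_partAlpha hb hxb]

lemma measurableSet_of_mem_partAlpha (hfm : Measurable f) {a : Set ℝ} (ha : a ∈ partAlpha f) :
    MeasurableSet a := by
  rw [eq_setOf_rtime_of_mem_partAlpha ha]
  exact measurableSet_Ioc.inter (measurable_rtime hfm (measurableSet_singleton _))

instance (f : ℝ → ℝ) : Countable (Words f) := by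
  have hsub : {w : List (Set ℝ) | w ≠ [] ∧ ∀ s ∈ w, s ∈ partAlpha f}
      ⊆ range (List.map fun k : ℕ => {x | x ∈ Yset ∧ rtime f x = k}) := by
    rintro w ⟨-, hw⟩
    refine ⟨w.map fun s => sInf (rtime f '' s), ?_⟩
    rw [List.map_map]
    conv_rhs => rw [← List.map_id w]
    exact List.map_congr_left fun s hs => (eq_setOf_rtime_of_mem_partAlpha (hw s hs)).symm
  exact ((countable_range _).mono hsub).to_subtype

def IsAdmissible (f : ℝ → ℝ) (u : List (Set ℝ)) : Prop := ∀ s ∈ u, s ∈ partAlpha f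

lemma isAdmissible_cons {a : Set ℝ} {u : List (Set ℝ)} :
    IsAdmissible f (a :: u) ↔ a ∈ partAlpha f ∧ IsAdmissible f u :=
  List.forall_mem_cons

lemma isAdmissible_append {u v : List (Set ℝ)} :
    IsAdmissible f (u ++ v) ↔ IsAdmissible f u ∧ IsAdmissible f v :=
  List.forall_mem_append

lemma Words.isAdmissible (w : Words f) : IsAdmissible f w.1 := w.2.2

lemma Yword_nil : Yword f [] = univ := by
  ext y
  simp [Yword]

lemma Yword_cons (a : Set ℝ) (u : List (Set ℝ)) :
    Yword f (a :: u) = a ∩ indmap f ⁻¹' Yword f u := by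
  ext y
  simp only [Yword, mem_inter_iff, mem_preimage, mem_ofPred_eq, List.length_cons]
  constructor
  · intro h
    refine ⟨by simpa using h 0 (by omega), fun k hk => ?_⟩
    simpa [Function.iterate_succ_apply] using h (k + 1) (by omega)
  · rintro ⟨h₀, h⟩ (_ | k) hk
    · simpa using h₀
    · simpa [Function.iterate_succ_apply] using h k (by omega)

lemma Yword_append (u v : List (Set ℝ)) :
    Yword f (u ++ v) = Yword f u ∩ (indmap f)^[u.length] ⁻¹' Yword f v := by
  induction u with
  | nil => simp [Yword_nil]
  | cons a u ih =>
    ext y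
    simp [Yword_cons, ih, and_assoc]

lemma Yword_subset_of_prefix {u v : List (Set ℝ)} (h : u <+: v) : Yword f v ⊆ Yword f u := by
  obtain ⟨t, rfl⟩ := h
  rw [Yword_append]
  exact inter_subset_left

lemma disjoint_Yword {u v : List (Set ℝ)} (hu : IsAdmissible f u) (hv : IsAdmissible f v)
    (huv : ¬ u <+: v) (hvu : ¬ v <+: u) : Disjoint (Yword f u) (Yword f v) := by
  induction u generalizing v with
  | nil => exact absurd (List.nil_prefix) huv
  | cons a u ih =>
    cases v with
    | nil => exact absurd (List.nil_prefix) hvu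
    | cons b v =>
      rw [isAdmissible_cons] at hu hv
      rw [Yword_cons, Yword_cons]
      by_cases hab : a = b
      · subst hab
        simp only [List.cons_prefix_cons, true_and] at huv hvu
        exact ((ih hu.2 hv.2 huv hvu).preimage _).mono inter_subset_right inter_subset_right
      · exact (disjoint_of_mem_partAlpha hu.1 hv.1 hab).mono inter_subset_left inter_subset_left

lemma measurableSet_Yword (hfm : Measurable f) {u : List (Set ℝ)} (hu : IsAdmissible f u) :
    MeasurableSet (Yword f u) := by
  induction u with
  | nil => simp [Yword_nil]
  | cons a u ih =>
    rw [isAdmissible_cons] at hu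
    rw [Yword_cons]
    exact (measurableSet_of_mem_partAlpha hfm hu.1).inter (measurable_indmap hfm (ih hu.2))

lemma hof_cons (a : Set ℝ) (u : List (Set ℝ)) :
    hof f (a :: u) = sInf (rtime f '' a) + hof f u := by
  simp [hof]

lemma Words.one_le_hof (w : Words f) : 1 ≤ hof f w.1 := by
  obtain ⟨_ | ⟨a, u⟩, hne, hw⟩ := w
  · exact absurd rfl hne
  · rw [hof_cons]
    have := one_le_sInf_rtime_image (hw a List.mem_cons_self)
    omega

lemma iterate_indmap_eq_iterate_hof {u : List (Set ℝ)} (hu : IsAdmissible f u) {y : ℝ}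
    (hy : y ∈ Yword f u) : (indmap f)^[u.length] y = f^[hof f u] y := by
  induction u generalizing y with
  | nil => simp [hof]
  | cons a u ih =>
    rw [isAdmissible_cons] at hu
    rw [Yword_cons] at hy
    have hFy : indmap f y = f^[sInf (rtime f '' a)] y := by
      rw [indmap, rtime_eq_of_mem_partAlpha hu.1 hy.1]
    rw [List.length_cons, Function.iterate_succ_apply, ih hu.2 hy.2, hFy, hof_cons,
      add_comm, Function.iterate_add_apply]

lemma abs_sub_le_of_mem_Yword {lam : ℝ} (hlam : 0 < lam)
    (hexp : ∀ a ∈ partAlpha f, ∀ x ∈ a, ∀ y ∈ a, lam * |x - y| ≤ |indmap f x - indmap f y|)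
    {u : List (Set ℝ)} (hu : IsAdmissible f u) {x y : ℝ} (hx : x ∈ Yword f u)
    (hy : y ∈ Yword f u) {k : ℕ} (hk : k < u.length) : |x - y| ≤ lam⁻¹ ^ k := by
  induction u generalizing x y k with
  | nil => exact absurd hk (Nat.not_lt_zero k)
  | cons a u ih =>
    rw [isAdmissible_cons] at hu
    rw [Yword_cons] at hx hy
    cases k with
    | zero =>
      simpa using abs_sub_le_one_of_mem_Yset (subset_Yset_of_mem_partAlpha hu.1 hx.1)
        (subset_Yset_of_mem_partAlpha hu.1 hy.1)
    | succ k =>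
      have hF := ih hu.2 hx.2 hy.2 (k := k) (by simpa using hk)
      calc |x - y| ≤ lam⁻¹ * |indmap f x - indmap f y| := by
            rw [inv_mul_eq_div, le_div_iff₀' hlam]
            exact hexp a hu.1 x hx.1 y hy.1
        _ ≤ lam⁻¹ * lam⁻¹ ^ k := by gcongr
        _ = lam⁻¹ ^ (k + 1) := (pow_succ' _ _).symm

end Cylinders

section Tower

variable {f : ℝ → ℝ}

instance (f : ℝ → ℝ) : Countable (MCState f) :=
  inferInstanceAs (Countable {p : Words f × ℕ // p.2 < hof f p.1.1})

instance (f : ℝ → ℝ) : MeasurableSingletonClass (MCState f) :=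
  ⟨fun _ => MeasurableSpace.measurableSet_top⟩

lemma MCState.ext_wordOf_levOf {s t : MCState f} (hw : wordOf s = wordOf t)
    (hl : levOf s = levOf t) : s = t :=
  Subtype.ext (Prod.ext hw hl)

/-- The level is clamped to `h(w) - 1` so that the whole climb is a sequence `ℕ → MCState f`. -/
noncomputable def towerState (w : Words f) (n : ℕ) : MCState f :=
  ⟨(w, min n (hof f w.1 - 1)), show min n (hof f w.1 - 1) < hof f w.1 by
    have := w.one_le_hof; omega⟩

@[simp]
lemma wordOf_towerState (w : Words f) (n : ℕ) : wordOf (towerState w n) = w := rfl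

lemma levOf_towerState {w : Words f} {n : ℕ} (hn : n < hof f w.1) :
    levOf (towerState w n) = n :=
  min_eq_left (by omega)

lemma mcTrans_towerState_succ (PA : Words f → ℝ≥0∞) (w : Words f) {j : ℕ}
    (hj : j + 1 < hof f w.1) : mcTrans f PA (towerState w j) (towerState w (j + 1)) = 1 := by
  rw [mcTrans, if_pos]
  rw [wordOf_towerState, levOf_towerState hj, levOf_towerState (by omega)]
  exact ⟨rfl, rfl, hj⟩

lemma mcTrans_towerState_top (PA : Words f → ℝ≥0∞) (w : Words f) (t : MCState f) :
    mcTrans f PA (towerState w (hof f w.1 - 1)) t = if levOf t = 0 then PA (wordOf t) else 0 := by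
  have hH := w.one_le_hof
  rw [mcTrans, wordOf_towerState, levOf_towerState (by omega), if_neg (by omega)]
  simp only [Nat.sub_add_cancel hH, true_and]

lemma eq_towerState_succ_of_mcAdm {w : Words f} {j : ℕ} (hj : j + 1 < hof f w.1) {t : MCState f}
    (h : mcAdm f (towerState w j) t) : t = towerState w (j + 1) := by
  rw [mcAdm, wordOf_towerState, levOf_towerState (by omega)] at h
  rcases h with ⟨hw, hl, -⟩ | ⟨hl, -⟩
  · exact MCState.ext_wordOf_levOf hw (by rw [hl, levOf_towerState hj])
  · omega

lemma levOf_eq_zero_of_mcAdm_top {w : Words f} {t : MCState f}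
    (h : mcAdm f (towerState w (hof f w.1 - 1)) t) : levOf t = 0 := by
  have hH := w.one_le_hof
  rw [mcAdm, wordOf_towerState, levOf_towerState (by omega)] at h
  rcases h with ⟨-, -, hlt⟩ | ⟨-, hl⟩
  · omega
  · exact hl

def towerEvent (w : Words f) : Set (ℕ → MCState f) :=
  initialCylinder (hof f w.1 - 1) (towerState w)

lemma measurableSet_towerEvent (w : Words f) : MeasurableSet (towerEvent w) :=
  measurableSet_initialCylinder _ _

lemma wordOf_eq_of_mem_towerEvent {w : Words f} {x : ℕ → MCState f} (hx : x ∈ towerEvent w) :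
    wordOf (x 0) = w := by
  rw [hx 0 (Nat.zero_le _), wordOf_towerState]

lemma levOf_zero_of_mem_towerEvent {w : Words f} {x : ℕ → MCState f} (hx : x ∈ towerEvent w) :
    levOf (x 0) = 0 := by
  rw [hx 0 (Nat.zero_le _), levOf_towerState w.one_le_hof]

lemma mem_towerEvent_of_mem_mcTraj {x : ℕ → MCState f} (hx : x ∈ mcTraj f)
    (h₀ : levOf (x 0) = 0) : x ∈ towerEvent (wordOf (x 0)) := by
  have hH := (wordOf (x 0)).one_le_hof
  intro n hn
  induction n with
  | zero => exact MCState.ext_wordOf_levOf rfl (by rw [h₀, levOf_towerState (by omega)])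
  | succ n ih =>
    rw [← eq_towerState_succ_of_mcAdm (by omega) (ih (by omega) ▸ hx n)]

lemma levOf_hof_eq_zero_of_mem_towerEvent {w : Words f} {x : ℕ → MCState f} (hx : x ∈ mcTraj f)
    (hw : x ∈ towerEvent w) : levOf (x (hof f w.1)) = 0 := by
  have hadm := hx (hof f w.1 - 1)
  rw [hw _ le_rfl, Nat.sub_add_cancel w.one_le_hof] at hadm
  exact levOf_eq_zero_of_mcAdm_top hadm

lemma seqShift_mem_mcTraj {x : ℕ → MCState f} (hx : x ∈ mcTraj f) (H : ℕ) :
    seqShift H x ∈ mcTraj f := fun n => by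
  simpa only [seqShift, Nat.add_right_comm n 1 H] using hx (n + H)

end Tower

section Follows

variable {f : ℝ → ℝ}

def Follows (f : ℝ → ℝ) (z : ℝ) (x : ℕ → MCState f) : Prop := ∀ n, f^[n] z ∈ mcX f (x n)

lemma Follows.mem_Yword {z : ℝ} {x : ℕ → MCState f} (hz : Follows f z x)
    (h₀ : levOf (x 0) = 0) : z ∈ Yword f (wordOf (x 0)).1 := by
  simpa [mcX, h₀] using hz 0

lemma Follows.iterate_seqShift {z : ℝ} {x : ℕ → MCState f} (hz : Follows f z x) (H : ℕ) :
    Follows f (f^[H] z) (seqShift H x) := fun n => by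
  rw [← Function.iterate_add_apply]
  exact hz (n + H)

lemma exists_Yword_of_follows (k : ℕ) {x : ℕ → MCState f} (hx : x ∈ mcTraj f)
    (h₀ : levOf (x 0) = 0) :
    ∃ u, IsAdmissible f u ∧ k ≤ u.length ∧ ∀ z, Follows f z x → z ∈ Yword f u := by
  induction k generalizing x with
  | zero => exact ⟨[], by simp [IsAdmissible], le_rfl, fun z _ => by simp [Yword_nil]⟩
  | succ k ih =>
    set w := wordOf (x 0)
    have hshift₀ : levOf (seqShift (hof f w.1) x 0) = 0 := by
      simpa [seqShift] using levOf_hof_eq_zero_of_mem_towerEvent hx (mem_towerEvent_of_mem_mcTraj hx h₀)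
    obtain ⟨u, hu, hk, hfollow⟩ := ih (seqShift_mem_mcTraj hx _) hshift₀
    refine ⟨w.1 ++ u, isAdmissible_append.2 ⟨w.isAdmissible, hu⟩, ?_, fun z hz => ?_⟩
    · have := List.length_pos_iff.2 w.2.1
      rw [List.length_append]
      omega
    · have hzw := hz.mem_Yword h₀
      rw [Yword_append]
      refine ⟨hzw, ?_⟩
      rw [mem_preimage, iterate_indmap_eq_iterate_hof w.isAdmissible hzw]
      exact hfollow _ (hz.iterate_seqShift _)

/-- A point following `x` lies in arbitrarily long cylinders, and these shrink. -/
lemma eq_of_follows {lam : ℝ} (hlam : 1 < lam)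
    (hexp : ∀ a ∈ partAlpha f, ∀ x ∈ a, ∀ y ∈ a, lam * |x - y| ≤ |indmap f x - indmap f y|)
    {x : ℕ → MCState f} (hx : x ∈ mcTraj f) (h₀ : levOf (x 0) = 0) {z₁ z₂ : ℝ}
    (h₁ : Follows f z₁ x) (h₂ : Follows f z₂ x) : z₁ = z₂ := by
  have hbound (k : ℕ) : |z₁ - z₂| ≤ lam⁻¹ ^ k := by
    obtain ⟨u, hu, hk, hfollow⟩ := exists_Yword_of_follows (k + 1) hx h₀
    exact abs_sub_le_of_mem_Yword (by linarith) hexp hu (hfollow z₁ h₁) (hfollow z₂ h₂) hk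
  have hlim := tendsto_pow_atTop_nhds_zero_of_lt_one (inv_nonneg.2 (by linarith : (0 : ℝ) ≤ lam))
    (inv_lt_one_of_one_lt₀ hlam)
  exact sub_eq_zero.1 (abs_nonpos_iff.1 (ge_of_tendsto' hlim hbound))

lemma proj_seqShift_eq_iterate_indmap {π : (ℕ → MCState f) → ℝ} (hπ : ∀ x ∈ mcTraj f, Follows f (π x) x)
    {lam : ℝ} (hlam : 1 < lam)
    (hexp : ∀ a ∈ partAlpha f, ∀ x ∈ a, ∀ y ∈ a, lam * |x - y| ≤ |indmap f x - indmap f y|)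
    {w : Words f} {x : ℕ → MCState f} (hx : x ∈ mcTraj f) (hw : x ∈ towerEvent w) :
    π (seqShift (hof f w.1) x) = (indmap f)^[w.1.length] (π x) := by
  have hshift₀ : levOf (seqShift (hof f w.1) x 0) = 0 := by
    simpa [seqShift] using levOf_hof_eq_zero_of_mem_towerEvent hx hw
  have hπx := (hπ x hx).mem_Yword (levOf_zero_of_mem_towerEvent hw)
  rw [wordOf_eq_of_mem_towerEvent hw] at hπx
  rw [iterate_indmap_eq_iterate_hof w.isAdmissible hπx]
  exact eq_of_follows hlam hexp (seqShift_mem_mcTraj hx _) hshift₀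
    (hπ _ (seqShift_mem_mcTraj hx _)) ((hπ x hx).iterate_seqShift _)

end Follows

section ChainLaw

variable {f : ℝ → ℝ} {PA : Words f → ℝ≥0∞} {PΩ : Measure (ℕ → MCState f)}

def IsChainLaw (PA : Words f → ℝ≥0∞) (PΩ : Measure (ℕ → MCState f)) : Prop :=
  ∀ (n : ℕ) (x : ℕ → MCState f), PΩ (initialCylinder n x)
    = mcNu f PA (x 0) * ∏ k ∈ Finset.range n, mcTrans f PA (x k) (x (k + 1))

/-- `E_{P_A}(h)`, the normalising constant of `mcNu`. -/
noncomputable def expectedHeight (f : ℝ → ℝ) (PA : Words f → ℝ≥0∞) : ℝ≥0∞ :=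
  ∑' w : Words f, (hof f w.1 : ℝ≥0∞) * PA w

lemma mcNu_eq (s : MCState f) : mcNu f PA s = PA (wordOf s) / expectedHeight f PA := rfl

lemma expectedHeight_ne_zero (hPA : ∑' w, PA w ≠ 0) : expectedHeight f PA ≠ 0 := by
  refine (lt_of_lt_of_le (pos_iff_ne_zero.2 hPA) (ENNReal.tsum_le_tsum fun w => ?_)).ne'
  exact le_mul_of_one_le_left bot_le (by exact_mod_cast w.one_le_hof)

lemma expectedHeight_ne_top [IsProbabilityMeasure PΩ] (hcyl : IsChainLaw PA PΩ) :
    expectedHeight f PA ≠ ⊤ := by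
  intro htop
  have hnull (s : MCState f) : PΩ (initialCylinder 0 fun _ => s) = 0 := by
    rw [hcyl, mcNu_eq, htop]
    simp
  have hcover : ⋃ s : MCState f, initialCylinder 0 (fun _ => s) = univ :=
    eq_univ_of_forall fun x => mem_iUnion.2 ⟨x 0, mem_initialCylinder_zero.2 rfl⟩
  have hnull_univ := measure_iUnion_null hnull
  rw [hcover, measure_univ] at hnull_univ
  exact one_ne_zero hnull_univ

lemma measure_towerEvent (hcyl : IsChainLaw PA PΩ) (w : Words f) :
    PΩ (towerEvent w) = PA w / expectedHeight f PA := by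
  have hclimb : ∀ j ∈ Finset.range (hof f w.1 - 1),
      mcTrans f PA (towerState w j) (towerState w (j + 1)) = 1 := fun j hj =>
    mcTrans_towerState_succ PA w (by rw [Finset.mem_range] at hj; omega)
  rw [towerEvent, hcyl, Finset.prod_eq_one hclimb, mul_one, mcNu_eq, wordOf_towerState]

lemma restrict_base_eq_sum (htraj : ∀ᵐ x ∂PΩ, x ∈ mcTraj f) :
    PΩ.restrict {x | x 0 ∈ mcBase f} = Measure.sum fun w => PΩ.restrict (towerEvent w) := by
  have hae : {x | x 0 ∈ mcBase f} =ᵐ[PΩ] ⋃ w, towerEvent w := by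
    refine eventuallyEq_set.2 (htraj.mono fun x hx => ⟨fun h₀ => ?_, fun h => ?_⟩)
    · exact mem_iUnion.2 ⟨_, mem_towerEvent_of_mem_mcTraj hx h₀⟩
    · obtain ⟨w, hw⟩ := mem_iUnion.1 h
      exact levOf_zero_of_mem_towerEvent hw
  rw [Measure.restrict_congr_set hae, Measure.restrict_iUnion _ measurableSet_towerEvent]
  intro w w' hne
  exact disjoint_left.2 fun x hx hx' =>
    hne ((wordOf_eq_of_mem_towerEvent hx).symm.trans (wordOf_eq_of_mem_towerEvent hx'))

lemma measure_base (hcyl : IsChainLaw PA PΩ) (htraj : ∀ᵐ x ∂PΩ, x ∈ mcTraj f)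
    (hPA : ∑' w, PA w = 1) : PΩ {x | x 0 ∈ mcBase f} = (expectedHeight f PA)⁻¹ := by
  have h := congrArg (· univ) (restrict_base_eq_sum htraj)
  simp only [Measure.restrict_apply_univ, Measure.sum_apply _ MeasurableSet.univ] at h
  simp_rw [h, measure_towerEvent hcyl, div_eq_mul_inv, ENNReal.tsum_mul_right, hPA, one_mul]

lemma prod_mcTrans_seqAppend_towerState (PA : Words f → ℝ≥0∞) (w : Words f)
    (c : ℕ → MCState f) (n : ℕ) :
    ∏ j ∈ Finset.range (hof f w.1 + n), mcTrans f PA (seqAppend (hof f w.1) (towerState w) c j)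
        (seqAppend (hof f w.1) (towerState w) c (j + 1))
      = mcTrans f PA (towerState w (hof f w.1 - 1)) (c 0)
          * ∏ k ∈ Finset.range n, mcTrans f PA (c k) (c (k + 1)) := by
  have hH := w.one_le_hof
  set H := hof f w.1
  rw [show H + n = (H - 1) + (n + 1) by omega, Finset.prod_range_add, Finset.prod_range_succ',
    Finset.prod_eq_one, one_mul]
  · have happend (k : ℕ) : seqAppend H (towerState w) c (H + k) = c k := by
      simp [seqAppend]
    rw [mul_comm]
    congr 1
    · rw [add_zero, show H - 1 + 1 = H + 0 by omega, happend]
      exact congrArg₂ _ (if_pos (by omega)) rfl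
    · refine Finset.prod_congr rfl fun k _ => ?_
      rw [show H - 1 + (k + 1) = H + k by omega, add_assoc, happend, happend]
  · intro j hj
    rw [Finset.mem_range] at hj
    simp only [seqAppend, if_pos (by omega : j < H), if_pos (by omega : j + 1 < H)]
    exact mcTrans_towerState_succ PA w (by omega)

/-- The strong Markov property at the first return to the base of the tower. -/
lemma map_seqShift_restrict_towerEvent [IsProbabilityMeasure PΩ] (hcyl : IsChainLaw PA PΩ)
    (htraj : ∀ᵐ x ∂PΩ, x ∈ mcTraj f) (hPA : ∑' w, PA w = 1) (w : Words f) :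
    (PΩ.restrict (towerEvent w)).map (seqShift (hof f w.1))
      = PA w • PΩ.restrict {x | x 0 ∈ mcBase f} := by
  have hH := w.one_le_hof
  refine ext_of_generate_finite _ pi_eq_generateFrom_initialCylinder isPiSystem_initialCylinder
    ?_ ?_
  · rintro _ ⟨n, c, rfl⟩
    have hc := measurableSet_initialCylinder n c
    rw [Measure.map_apply (measurable_seqShift _) hc,
      Measure.restrict_apply (measurable_seqShift _ hc), inter_comm, towerEvent,
      initialCylinder_inter_preimage_seqShift hH, hcyl, prod_mcTrans_seqAppend_towerState,
      Measure.smul_apply, smul_eq_mul, Measure.restrict_apply hc,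
      show seqAppend (hof f w.1) (towerState w) c 0 = towerState w 0 from if_pos hH,
      mcTrans_towerState_top]
    split_ifs with hc₀
    · have hsub : initialCylinder n c ⊆ {x | x 0 ∈ mcBase f} := fun y hy =>
        show levOf (y 0) = 0 from hy 0 (Nat.zero_le _) ▸ hc₀
      rw [inter_eq_left.2 hsub, hcyl]
      simp only [mcNu_eq, wordOf_towerState, div_eq_mul_inv]
      ring
    · have hdisj : initialCylinder n c ∩ {x | x 0 ∈ mcBase f} = ∅ :=
        eq_empty_of_forall_notMem fun y ⟨hy, hy₀⟩ => hc₀ (hy 0 (Nat.zero_le _) ▸ hy₀)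
      simp [hdisj]
  · rw [Measure.map_apply (measurable_seqShift _) MeasurableSet.univ, preimage_univ,
      Measure.restrict_apply_univ, Measure.smul_apply, Measure.restrict_apply_univ,
      measure_towerEvent hcyl, measure_base hcyl htraj hPA, smul_eq_mul, div_eq_mul_inv]

end ChainLaw

section Regenerative

variable {f : ℝ → ℝ} {PA : Words f → ℝ≥0∞}

/-- The regenerative disintegration `ν = Σ_w P_A(w) m_w` of the paper, with `κ w = P_A(w) m_w`. -/
structure IsRegenerative (f : ℝ → ℝ) (PA : Words f → ℝ≥0∞) (ν : Measure ℝ)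
    (κ : Words f → Measure ℝ) : Prop where
  eq_sum : ν = Measure.sum κ
  apply_compl_Yword : ∀ w, κ w (Yword f w.1)ᶜ = 0
  apply_univ : ∀ w, κ w univ = PA w
  map_iterate_indmap : ∀ w, (κ w).map ((indmap f)^[w.1.length]) = PA w • ν

def longCylinders (f : ℝ → ℝ) (n : ℕ) : Set ℝ :=
  ⋃ w : {w : Words f // n ≤ w.1.length}, Yword f w.1.1

lemma measurableSet_longCylinders (hfm : Measurable f) (n : ℕ) :
    MeasurableSet (longCylinders f n) :=
  .iUnion fun w => measurableSet_Yword hfm w.1.isAdmissible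

lemma inter_iInter_longCylinders_subset {lam : ℝ} (hlam : 1 < lam)
    (hexp : ∀ a ∈ partAlpha f, ∀ x ∈ a, ∀ y ∈ a, lam * |x - y| ≤ |indmap f x - indmap f y|)
    {U : Set ℝ} (hU : IsOpen U) :
    U ∩ ⋂ n, longCylinders f n ⊆ ⋃ w ∈ {w : Words f | Yword f w.1 ⊆ U}, Yword f w.1 := by
  rintro y ⟨hyU, hy⟩
  obtain ⟨ε, hε, hball⟩ := Metric.isOpen_iff.1 hU y hyU
  obtain ⟨n, hn⟩ := exists_pow_lt_of_lt_one hε (inv_lt_one_of_one_lt₀ hlam)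
  obtain ⟨⟨w, hw⟩, hyw⟩ := mem_iUnion.1 (mem_iInter.1 hy (n + 1))
  refine mem_iUnion₂.2 ⟨w, fun z hz => hball ?_, hyw⟩
  rw [Metric.mem_ball, Real.dist_eq]
  exact (abs_sub_le_of_mem_Yword (by linarith) hexp w.isAdmissible hz hyw hw).trans_lt hn

lemma isPiSystem_Yword : IsPiSystem {A | ∃ u, IsAdmissible f u ∧ A = Yword f u} := by
  rintro _ ⟨u, hu, rfl⟩ _ ⟨v, hv, rfl⟩ hne
  by_cases huv : u <+: v
  · exact ⟨v, hv, inter_eq_right.2 (Yword_subset_of_prefix huv)⟩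
  by_cases hvu : v <+: u
  · exact ⟨u, hu, inter_eq_left.2 (Yword_subset_of_prefix hvu)⟩
  exact absurd (disjoint_Yword hu hv huv hvu).inter_eq hne.ne_empty

namespace IsRegenerative

variable {ν ν₁ ν₂ : Measure ℝ} {κ κ₁ κ₂ : Words f → Measure ℝ}

lemma measure_univ_eq_tsum (h : IsRegenerative f PA ν κ) : ν univ = ∑' w, PA w := by
  rw [h.eq_sum, Measure.sum_apply _ MeasurableSet.univ]
  exact tsum_congr h.apply_univ

lemma apply_Yword_of_prefix (h : IsRegenerative f PA ν κ) {u : List (Set ℝ)} {w : Words f}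
    (huw : u <+: w.1) : κ w (Yword f u) = PA w := by
  have hconull := h.apply_compl_Yword w
  calc κ w (Yword f u) = κ w (Yword f u ∩ Yword f w.1) := (measure_inter_conull hconull).symm
    _ = κ w (univ ∩ Yword f w.1) := by
        rw [inter_eq_right.2 (Yword_subset_of_prefix huw), univ_inter]
    _ = PA w := by rw [measure_inter_conull hconull, h.apply_univ]

lemma apply_Yword_append (hfm : Measurable f) (h : IsRegenerative f PA ν κ) (w : Words f)
    {t : List (Set ℝ)} (ht : IsAdmissible f t) :
    κ w (Yword f (w.1 ++ t)) = PA w * ν (Yword f t) := by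
  rw [Yword_append, inter_comm, measure_inter_conull (h.apply_compl_Yword w),
    ← Measure.map_apply ((measurable_indmap hfm).iterate _) (measurableSet_Yword hfm ht),
    h.map_iterate_indmap, Measure.smul_apply, smul_eq_mul]

lemma apply_Yword_of_not_prefix (h : IsRegenerative f PA ν κ) {u : List (Set ℝ)}
    (hu : IsAdmissible f u) {w : Words f} (huw : ¬ u <+: w.1) (hwu : ¬ w.1 <+: u) :
    κ w (Yword f u) = 0 :=
  measure_mono_null (disjoint_Yword hu w.isAdmissible huw hwu).subset_compl_right
    (h.apply_compl_Yword w)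

lemma apply_Yword_eq (hfm : Measurable f) (h₁ : IsRegenerative f PA ν₁ κ₁)
    (h₂ : IsRegenerative f PA ν₂ κ₂) {u : List (Set ℝ)} (hu : IsAdmissible f u) :
    ν₁ (Yword f u) = ν₂ (Yword f u) := by
  induction hlen : u.length using Nat.strong_induction_on generalizing u with
  | _ n ih =>
  rw [h₁.eq_sum, h₂.eq_sum, Measure.sum_apply _ (measurableSet_Yword hfm hu),
    Measure.sum_apply _ (measurableSet_Yword hfm hu)]
  refine tsum_congr fun w => ?_
  by_cases huw : u <+: w.1
  · rw [h₁.apply_Yword_of_prefix huw, h₂.apply_Yword_of_prefix huw]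
  by_cases hwu : w.1 <+: u
  · obtain ⟨t, rfl⟩ := hwu
    have ht := (isAdmissible_append.1 hu).2
    have hw := List.length_pos_iff.2 w.2.1
    rw [h₁.apply_Yword_append hfm w ht, h₂.apply_Yword_append hfm w ht,
      ih t.length (by rw [← hlen, List.length_append]; omega) ht rfl]
  · rw [h₁.apply_Yword_of_not_prefix hu huw hwu, h₂.apply_Yword_of_not_prefix hu huw hwu]

lemma measure_compl_longCylinders (hfm : Measurable f) (h : IsRegenerative f PA ν κ) (n : ℕ) :
    ν (longCylinders f n)ᶜ = 0 := by
  induction n with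
  | zero =>
    rw [h.eq_sum, Measure.sum_apply_eq_zero]
    intro w
    refine measure_mono_null (compl_subset_compl.2 ?_) (h.apply_compl_Yword w)
    exact subset_iUnion (fun v : {v : Words f // 0 ≤ v.1.length} => Yword f v.1.1)
      ⟨w, Nat.zero_le _⟩
  | succ n ih =>
    rw [h.eq_sum, Measure.sum_apply_eq_zero]
    intro w
    have hsub : (longCylinders f (n + 1))ᶜ
        ⊆ (Yword f w.1)ᶜ ∪ (indmap f)^[w.1.length] ⁻¹' (longCylinders f n)ᶜ := by
      intro y hy
      rw [mem_union, mem_compl_iff, mem_preimage, mem_compl_iff, ← not_and_or]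
      rintro ⟨hyw, hyv⟩
      obtain ⟨⟨v, hv⟩, hyv⟩ := mem_iUnion.1 hyv
      have hw := List.length_pos_iff.2 w.2.1
      refine hy (mem_iUnion.2 ⟨⟨⟨w.1 ++ v.1, by simp [w.2.1],
        isAdmissible_append.2 ⟨w.isAdmissible, v.isAdmissible⟩⟩, ?_⟩, ?_⟩)
      · rw [List.length_append]
        omega
      · rw [Yword_append]
        exact ⟨hyw, hyv⟩
    refine measure_mono_null hsub (measure_union_null (h.apply_compl_Yword w) ?_)
    rw [← Measure.map_apply ((measurable_indmap hfm).iterate _)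
      (measurableSet_longCylinders hfm n).compl, h.map_iterate_indmap, Measure.smul_apply, ih,
      smul_zero]

theorem unique (hfm : Measurable f) {lam : ℝ} (hlam : 1 < lam)
    (hexp : ∀ a ∈ partAlpha f, ∀ x ∈ a, ∀ y ∈ a, lam * |x - y| ≤ |indmap f x - indmap f y|)
    (hPA : ∑' w, PA w ≠ ⊤) (h₁ : IsRegenerative f PA ν₁ κ₁) (h₂ : IsRegenerative f PA ν₂ κ₂) :
    ν₁ = ν₂ := by
  set C := {A | ∃ u, IsAdmissible f u ∧ A = Yword f u}
  set G := ⋂ n, longCylinders f n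
  have hYC {u : List (Set ℝ)} (hu : IsAdmissible f u) :
      MeasurableSet[MeasurableSpace.generateFrom C] (Yword f u) :=
    MeasurableSpace.measurableSet_generateFrom ⟨u, hu, rfl⟩
  have hGC : MeasurableSet[MeasurableSpace.generateFrom C] G :=
    .iInter fun n => .iUnion fun w => hYC w.1.isAdmissible
  have : IsFiniteMeasure ν₁ := ⟨by rw [h₁.measure_univ_eq_tsum]; exact hPA.lt_top⟩
  refine Measure.ext_of_isPiSystem_of_isOpen_inter isPiSystem_Yword ?_ ?_ ?_ hGC ?_ ?_
  · rintro _ ⟨u, hu, rfl⟩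
    exact measurableSet_Yword hfm hu
  · rintro _ ⟨u, hu, rfl⟩
    exact apply_Yword_eq hfm h₁ h₂ hu
  · rw [← Yword_nil]
    exact apply_Yword_eq hfm h₁ h₂ (by simp [IsAdmissible])
  · rw [compl_iInter]
    exact measure_iUnion_null (h₁.measure_compl_longCylinders hfm)
  · intro U hU
    have hUG : U ∩ G = (⋃ w ∈ {w : Words f | Yword f w.1 ⊆ U}, Yword f w.1) ∩ G := by
      refine Subset.antisymm (fun y hy => ⟨inter_iInter_longCylinders_subset hlam hexp hU hy, hy.2⟩) ?_
      rintro y ⟨hy, hyG⟩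
      obtain ⟨w, hw, hyw⟩ := mem_iUnion₂.1 hy
      exact ⟨hw hyw, hyG⟩
    rw [hUG]
    exact (MeasurableSet.biUnion (to_countable _) fun w _ => hYC w.isAdmissible).inter hGC

end IsRegenerative

end Regenerative

section RegenerativeMeasures

variable {f : ℝ → ℝ} {PA : Words f → ℝ≥0∞}

lemma isRegenerative_of_disintegration {ν : Measure ℝ} {mw : Words f → Measure ℝ}
    (hdis : ν = Measure.sum fun w => PA w • mw w) (hmwp : ∀ w, IsProbabilityMeasure (mw w))
    (hmwsupp : ∀ w : Words f, mw w (Yword f w.1)ᶜ = 0)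
    (hmwpush : ∀ w : Words f, (mw w).map ((indmap f)^[w.1.length]) = ν) :
    IsRegenerative f PA ν fun w => PA w • mw w where
  eq_sum := hdis
  apply_compl_Yword w := by rw [Measure.smul_apply, hmwsupp, smul_zero]
  apply_univ w := by rw [Measure.smul_apply, (hmwp w).measure_univ, smul_eq_mul, mul_one]
  map_iterate_indmap w := by rw [Measure.map_smul, hmwpush]

lemma isRegenerative_map_proj {PΩ : Measure (ℕ → MCState f)} [IsProbabilityMeasure PΩ]
    (hfm : Measurable f) (hcyl : IsChainLaw PA PΩ) (htraj : ∀ᵐ x ∂PΩ, x ∈ mcTraj f)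
    (hPA : ∑' w, PA w = 1) {π : (ℕ → MCState f) → ℝ} (hπm : Measurable π)
    (hπ : ∀ x ∈ mcTraj f, Follows f (π x) x) {lam : ℝ} (hlam : 1 < lam)
    (hexp : ∀ a ∈ partAlpha f, ∀ x ∈ a, ∀ y ∈ a, lam * |x - y| ≤ |indmap f x - indmap f y|) :
    IsRegenerative f PA ((expectedHeight f PA • PΩ.restrict {x | x 0 ∈ mcBase f}).map π)
      fun w => expectedHeight f PA • (PΩ.restrict (towerEvent w)).map π where
  eq_sum := by
    ext s hs
    simp [Measure.map_apply hπm hs, Measure.sum_apply _ hs, Measure.sum_apply _ (hπm hs),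
      restrict_base_eq_sum htraj, ENNReal.tsum_mul_left]
  apply_compl_Yword w := by
    have hY := measurableSet_Yword hfm w.isAdmissible
    have hae : ∀ᵐ x ∂PΩ.restrict (towerEvent w), π x ∈ Yword f w.1 :=
      (ae_restrict_iff' (measurableSet_towerEvent w)).2 <| htraj.mono fun x hx hw => by
        simpa [wordOf_eq_of_mem_towerEvent hw] using
          (hπ x hx).mem_Yword (levOf_zero_of_mem_towerEvent hw)
    have hnull : PΩ.restrict (towerEvent w) (π ⁻¹' (Yword f w.1)ᶜ) = 0 := ae_iff.1 hae
    rw [Measure.smul_apply, Measure.map_apply hπm hY.compl, hnull, smul_zero]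
  apply_univ w := by
    rw [Measure.smul_apply, Measure.map_apply hπm .univ, preimage_univ,
      Measure.restrict_apply_univ, measure_towerEvent hcyl, smul_eq_mul,
      ENNReal.mul_div_cancel (expectedHeight_ne_zero (by simp [hPA]))
        (expectedHeight_ne_top hcyl)]
  map_iterate_indmap w := by
    have hcomm : (indmap f)^[w.1.length] ∘ π =ᵐ[PΩ.restrict (towerEvent w)]
        π ∘ seqShift (hof f w.1) :=
      (ae_restrict_iff' (measurableSet_towerEvent w)).2 <| htraj.mono fun x hx hw =>
        (proj_seqShift_eq_iterate_indmap hπ hlam hexp hx hw).symm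
    rw [Measure.map_smul, Measure.map_map ((measurable_indmap hfm).iterate _) hπm,
      Measure.map_congr hcomm, ← Measure.map_map hπm (measurable_seqShift _),
      map_seqShift_restrict_towerEvent hcyl htraj hPA, Measure.map_smul, Measure.map_smul,
      smul_comm]

end RegenerativeMeasures

theorem projection_conditioned_law_general
    (f : ℝ → ℝ) (hfm : Measurable f)
    (PA : Words f → ℝ≥0∞) (mw : Words f → Measure ℝ)
    (hPAsum : ∑' w : Words f, PA w = 1)
    (hdis : mY = Measure.sum fun w : Words f => PA w • mw w)
    (hmwp : ∀ w : Words f, IsProbabilityMeasure (mw w))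
    (hmwsupp : ∀ w : Words f, mw w (Yword f w.1)ᶜ = 0)
    (hmwpush : ∀ w : Words f, (mw w).map ((indmap f)^[w.1.length]) = mY)
    (lam : ℝ) (hlam : 1 < lam)
    (hexp : ∀ a ∈ partAlpha f, ∀ x ∈ a, ∀ y ∈ a,
      lam * |x - y| ≤ |indmap f x - indmap f y|)
    (PΩ : Measure (ℕ → MCState f)) [IsProbabilityMeasure PΩ]
    (hcyl : ∀ (n : ℕ) (x : ℕ → MCState f),
      PΩ {y | ∀ k ≤ n, y k = x k}
        = mcNu f PA (x 0) * ∏ k ∈ Finset.range n, mcTrans f PA (x k) (x (k + 1)))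
    (hsupp : PΩ (mcTraj f)ᶜ = 0)
    (π : (ℕ → MCState f) → ℝ) (hπm : Measurable π)
    (hπ : ∀ x ∈ mcTraj f, ∀ n : ℕ, f^[n] (π x) ∈ mcX f (x n))
    :
    ((PΩ {x | x 0 ∈ mcBase f})⁻¹ • PΩ.restrict {x | x 0 ∈ mcBase f}).map π = mY := by
  have htraj : ∀ᵐ x ∂PΩ, x ∈ mcTraj f := measure_eq_zero_iff_ae_notMem.1 hsupp |>.mono
    fun _ => not_not.1
  rw [measure_base hcyl htraj hPAsum, inv_inv]
  exact IsRegenerative.unique hfm hlam hexp (by simp [hPAsum])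
    (isRegenerative_map_proj hfm hcyl htraj hPAsum hπm hπ hlam hexp)
    (isRegenerative_of_disintegration hdis hmwp hmwsupp hmwpush)

/-- **The projection sends the conditioned chain measure to the reference measure**
(Proposition 2.7). Let `Ω₀ = {(g₀, g₁, …) ∈ Ω : g₀ ∈ S₀}` and let `P_{Ω₀}` be `P_Ω`
conditioned on `Ω₀`. Then `π_* P_{Ω₀} = m`, the normalized Lebesgue measure on `Y`. -/
theorem projection_conditioned_law
    (γ : ℝ) (hγ0 : 0 < γ) (hγ1 : γ < 1)
    (f : ℝ → ℝ) (hf : IsLSV γ f ∨ IsHG γ f) (hfm : Measurable f)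
    (PA : Words f → ℝ≥0∞) (mw : Words f → Measure ℝ)
    (hPAsum : ∑' w : Words f, PA w = 1) (hPApos : ∀ w, 0 < PA w)
    (hdis : mY = Measure.sum fun w : Words f => PA w • mw w)
    (hmwp : ∀ w : Words f, IsProbabilityMeasure (mw w))
    (hmwsupp : ∀ w : Words f, mw w (Yword f w.1)ᶜ = 0)
    (hmwpush : ∀ w : Words f, (mw w).map ((indmap f)^[w.1.length]) = mY)
    (lam : ℝ) (hlam : 1 < lam)
    (hexp : ∀ a ∈ partAlpha f, ∀ x ∈ a, ∀ y ∈ a,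
      lam * |x - y| ≤ |indmap f x - indmap f y|)
    (PΩ : Measure (ℕ → MCState f)) [IsProbabilityMeasure PΩ]
    (hcyl : ∀ (n : ℕ) (x : ℕ → MCState f),
      PΩ {y | ∀ k ≤ n, y k = x k}
        = mcNu f PA (x 0) * ∏ k ∈ Finset.range n, mcTrans f PA (x k) (x (k + 1)))
    (hsupp : PΩ (mcTraj f)ᶜ = 0)
    (π : (ℕ → MCState f) → ℝ) (hπm : Measurable π)
    (hπ : ∀ x ∈ mcTraj f, ∀ n : ℕ, f^[n] (π x) ∈ mcX f (x n))
    :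
    ((PΩ {x | x 0 ∈ mcBase f})⁻¹ • PΩ.restrict {x | x 0 ∈ mcBase f}).map π = mY :=
  projection_conditioned_law_general f hfm PA mw hPAsum hdis hmwp hmwsupp hmwpush lam hlam hexp PΩ
    hcyl hsupp π hπm hπ
end

section
/- Suppose the return times of f have a weak polynomial moment of order β. Then, on the probability space (Y, μ_Y), max_{k≤n} τ∘F^k = o(n^{1/β} (log n)^{1/β + ε}) almost surely for every ε > 0. If instead the return times have a strong polynomial moment of order β, then max_{k≤n} τ∘F^k = o(n^{1/β}) almost surely. -/
open MeasureTheory ProbabilityTheory Filter Asymptotics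
open scoped ENNReal NNReal

/-- A nonuniformly expanding dynamical system on a metric measurable space `X`:
a map `f` with an inducing scheme over a closed reference set `Y` with reference
probability measure `m`, a countable partition `part` of `Y` (mod `m`), a return time
`τ` constant on partition elements, and an induced map `F = f^τ` which is uniformly
expanding with bounded distortion; together with the absolutely continuous
`F`-invariant measure `μY` on `Y` and the corresponding `f`-invariant measure `μ`. -/
structure NUESystem (X : Type*) [MetricSpace X] [MeasurableSpace X] : Type _ where
  f : X → X
  hfm : Measurable f
  Y : Set X
  hYclosed : IsClosed Y
  m : Measure X
  hmprob : IsProbabilityMeasure m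
  hmY : m Yᶜ = 0
  part : Set (Set X)
  hpartCount : part.Countable
  hpartSub : ∀ a ∈ part, a ⊆ Y
  hpartMeas : ∀ a ∈ part, MeasurableSet a
  hpartPos : ∀ a ∈ part, 0 < m a
  hpartDisj : ∀ a ∈ part, ∀ b ∈ part, a ≠ b → m (a ∩ b) = 0
  hpartCover : m (Y \ ⋃₀ part) = 0
  τ : X → ℕ
  hτm : Measurable τ
  hτpos : ∀ x ∈ Y, 1 ≤ τ x
  hτconst : ∀ a ∈ part, ∀ x ∈ a, ∀ y ∈ a, τ x = τ y
  hτret : ∀ a ∈ part, ∀ x ∈ a, f^[τ x] x ∈ Y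
  hτint : ∫⁻ x, (τ x : ℝ≥0∞) ∂m < ⊤
  κ : ℝ
  K : ℝ
  ηe : ℝ
  hκ : 1 < κ
  hK : 0 < K
  hηe : 0 < ηe ∧ ηe ≤ 1
  hbij : ∀ a ∈ part, Set.BijOn (fun x => f^[τ x] x) a Y
  hnonsing : ∀ a ∈ part, ∀ s : Set X, MeasurableSet s → s ⊆ a →
    (m s = 0 ↔ m ((fun x => f^[τ x] x) '' s) = 0)
  hexp : ∀ a ∈ part, ∀ x ∈ a, ∀ y ∈ a, κ * dist x y ≤ dist (f^[τ x] x) (f^[τ y] y)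
  hcomp : ∀ a ∈ part, ∀ x ∈ a, ∀ y ∈ a, ∀ k ≤ τ x,
    dist (f^[k] x) (f^[k] y) ≤ K * dist (f^[τ x] x) (f^[τ y] y)
  ζ : Set X → X → ℝ
  hζpos : ∀ a ∈ part, ∀ x ∈ a, 0 < ζ a x
  hζjac : ∀ a ∈ part, ∀ s : Set X, MeasurableSet s → s ⊆ a →
    m ((fun x => f^[τ x] x) '' s) = ∫⁻ x in s, ENNReal.ofReal (ζ a x)⁻¹ ∂m
  hζdist : ∀ a ∈ part, ∀ x ∈ a, ∀ y ∈ a,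
    |Real.log (ζ a x) - Real.log (ζ a y)| ≤ K * dist (f^[τ x] x) (f^[τ y] y) ^ ηe
  hclosure : ∀ w : List (Set X), (∀ a ∈ w, a ∈ part) →
    m {x | ∀ k < w.length, (fun y => f^[τ y] y)^[k] x ∈ w.getD k ∅}
      = m (closure {x | ∀ k < w.length, (fun y => f^[τ y] y)^[k] x ∈ w.getD k ∅})
  μY : Measure X
  hμYprob : IsProbabilityMeasure μY
  hμYsupp : μY Yᶜ = 0
  hμYinv : μY.map (fun x => f^[τ x] x) = μY
  hμYdens : ∃ c : ℝ≥0∞, 0 < c ∧ c < ⊤ ∧ ∀ s : Set X, μY s ≤ c * m s ∧ m s ≤ c * μY s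
  μ : Measure X
  hμprob : IsProbabilityMeasure μ
  hμinv : μ.map f = μ
  hμdef : μ = (∫⁻ x, (τ x : ℝ≥0∞) ∂μY)⁻¹ •
    Measure.sum fun j : ℕ => (μY.restrict {x | x ∈ Y ∧ j < τ x}).map (f^[j])

/-- The induced map `F = f^τ` of a nonuniformly expanding system. -/
def NUESystem.F {X : Type*} [MetricSpace X] [MeasurableSpace X]
    (sys : NUESystem X) (x : X) : X :=
  sys.f^[sys.τ x] x

/-- The return times of the system have a weak polynomial moment of order `β`:
`m(τ ≥ n) = O(n^{-β})`. -/
def NUESystem.WeakMoment {X : Type*} [MetricSpace X] [MeasurableSpace X]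
    (sys : NUESystem X) (β : ℝ) : Prop :=
  ∃ C : ℝ, 0 < C ∧ ∀ n : ℕ, 1 ≤ n →
    sys.m {x | x ∈ sys.Y ∧ n ≤ sys.τ x} ≤ ENNReal.ofReal (C * (n : ℝ) ^ (-β))

/-- The return times of the system have a strong polynomial moment of order `β`:
`∫ τ^β dm < ∞`. -/
def NUESystem.StrongMoment {X : Type*} [MetricSpace X] [MeasurableSpace X]
    (sys : NUESystem X) (β : ℝ) : Prop :=
  ∫⁻ x, (sys.τ x : ℝ≥0∞) ^ β ∂sys.m < ⊤

/-!
Since `F` preserves `μ_Y`, whose density with respect to `m` is bounded, `μ_Y(τ ∘ F^n ≥ t)` is at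
most a constant times `m(τ ≥ t)`. For `b_n = n^{1/β}` under the strong moment, and
`b_n = n^{1/β} (log n)^{1/β+ε}` under the weak one, `∑_n m(τ ≥ δ b_n) < ∞` for every `δ > 0`:
in the strong case the sum is at most `δ^{-β} ∫ τ^β dm`, in the weak case its terms are
`O(1 / (n (log n)^{1+εβ}))`. Borel–Cantelli gives `τ ∘ F^n = o(b_n)` almost surely, and a running
maximum of an `o(b_n)` sequence is still `o(b_n)` because `b_n` increases to infinity.
-/

namespace Real

theorem summable_inv_mul_log_rpow {p : ℝ} (hp : 1 < p) :
    Summable fun n : ℕ => ((n : ℝ) * Real.log n ^ p)⁻¹ := by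
  rw [← summable_condensed_iff_of_eventually_nonneg
    (Eventually.of_forall fun n => by positivity)]
  · have hcond : ∀ k : ℕ, (2 : ℝ) ^ k * (((2 ^ k : ℕ) : ℝ) * Real.log (2 ^ k : ℕ) ^ p)⁻¹
        = (Real.log 2 ^ p)⁻¹ * ((k : ℝ) ^ p)⁻¹ := by
      intro k
      have hlog : Real.log ((2 ^ k : ℕ) : ℝ) = k * Real.log 2 := by
        rw [Nat.cast_pow, Nat.cast_ofNat, Real.log_pow]
      rw [hlog, Real.mul_rpow (Nat.cast_nonneg k) (Real.log_nonneg one_le_two), Nat.cast_pow,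
        Nat.cast_ofNat, mul_inv, ← mul_assoc, mul_inv_cancel₀ (by positivity), one_mul, mul_inv,
        mul_comm]
    simp_rw [hcond]
    exact (Real.summable_nat_rpow_inv.2 hp).mul_left _
  · filter_upwards [eventually_ge_atTop 2] with k hk
    have hk' : (2 : ℝ) ≤ k := by exact_mod_cast hk
    have hlog : 0 < Real.log k := Real.log_pos (by linarith)
    apply inv_anti₀ (mul_pos (by positivity) (Real.rpow_pos_of_pos hlog p))
    push_cast
    gcongr
    · linarith
    · linarith

end Real

theorem ENNReal.tsum_ne_top_of_summable_toReal {α : Type*} {f : α → ℝ≥0∞} (hf : ∀ a, f a ≠ ∞)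
    (h : Summable fun a => (f a).toReal) : ∑' a, f a ≠ ∞ := by
  have hcoe : f = fun a => ((f a).toNNReal : ℝ≥0∞) :=
    funext fun a => (ENNReal.coe_toNNReal (hf a)).symm
  rw [hcoe, ENNReal.tsum_coe_ne_top_iff_summable, ← NNReal.summable_coe]
  exact h

theorem ENNReal.tsum_ite_succ_mul_le_le (a t : ℝ≥0∞) :
    ∑' n : ℕ, (if (n + 1) * a ≤ t then a else 0) ≤ t := by
  refine ENNReal.tsum_le_of_sum_range_le fun N => ?_
  induction N with
  | zero => simp
  | succ N ih =>
    rw [Finset.sum_range_succ]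
    split_ifs with hN
    · calc ∑ n ∈ Finset.range N, (if (n + 1) * a ≤ t then a else 0) + a
          ≤ ∑ _n ∈ Finset.range N, a + a := by
            gcongr with n; split_ifs <;> simp
        _ = (N + 1) * a := by simp [add_mul]
        _ ≤ t := by exact_mod_cast hN
    · simpa using ih

theorem MeasureTheory.tsum_mul_measure_succ_mul_le_le_lintegral {α : Type*} [MeasurableSpace α]
    (μ : Measure α) {g : α → ℝ≥0∞} (hg : Measurable g) (a : ℝ≥0∞) :
    ∑' n : ℕ, a * μ {x | (n + 1) * a ≤ g x} ≤ ∫⁻ x, g x ∂μ := by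
  have hmeas : ∀ n : ℕ, MeasurableSet {x | (n + 1) * a ≤ g x} :=
    fun n => measurableSet_le measurable_const hg
  calc ∑' n : ℕ, a * μ {x | (n + 1) * a ≤ g x}
      = ∑' n : ℕ, ∫⁻ x, {x | (n + 1) * a ≤ g x}.indicator (fun _ => a) x ∂μ := by
        simp_rw [lintegral_indicator_const (hmeas _)]
    _ = ∫⁻ x, ∑' n : ℕ, (if (n + 1) * a ≤ g x then a else 0) ∂μ := by
        rw [← lintegral_tsum fun n => (measurable_const.indicator (hmeas n)).aemeasurable]
        simp only [Set.indicator_apply, Set.mem_ofPred_eq]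
    _ ≤ ∫⁻ x, g x ∂μ := lintegral_mono fun x => ENNReal.tsum_ite_succ_mul_le_le a (g x)

theorem MeasureTheory.ae_isLittleO_of_tsum_measure_ne_top {α E : Type*} [MeasurableSpace α]
    [Norm E] {μ : Measure α} {u : ℕ → α → E} {b : ℕ → ℝ}
    (h : ∀ δ > 0, ∑' n, μ {x | δ * ‖b n‖ ≤ ‖u n x‖} ≠ ∞) :
    ∀ᵐ x ∂μ, (fun n => u n x) =o[atTop] b := by
  have hj : ∀ j : ℕ, ∀ᵐ x ∂μ, ∀ᶠ n in atTop, ‖u n x‖ < 1 / ((j : ℝ) + 1) * ‖b n‖ := by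
    intro j
    filter_upwards [ae_eventually_notMem (h (1 / ((j : ℝ) + 1)) (by positivity))] with x hx
    filter_upwards [hx] with n hn
    exact not_le.1 hn
  filter_upwards [ae_all_iff.2 hj] with x hx
  refine isLittleO_iff.2 fun c hc => ?_
  obtain ⟨j, hjc⟩ := exists_nat_one_div_lt hc
  filter_upwards [hx j] with n hn
  exact hn.le.trans (by gcongr)

theorem Asymptotics.IsLittleO.sup_range {u : ℕ → ℕ} {b : ℕ → ℝ} {n₀ : ℕ}
    (hu : (fun n => (u n : ℝ)) =o[atTop] b) (hb : Tendsto b atTop atTop)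
    (hb_mono : MonotoneOn b (Set.Ici n₀)) :
    (fun n => (((Finset.range (n + 1)).sup u : ℕ) : ℝ)) =o[atTop] b := by
  refine isLittleO_iff.2 fun c hc => ?_
  obtain ⟨N, hN⟩ := eventually_atTop.1 <|
    (hu.def hc).and ((hb.eventually_ge_atTop 0).and (eventually_ge_atTop n₀))
  set M := (Finset.range N).sup u
  filter_upwards [hb.eventually_ge_atTop (M / c), eventually_ge_atTop N] with n hMn hNn
  obtain ⟨k, hk, hsup⟩ := Finset.exists_mem_eq_sup _ Finset.nonempty_range_add_one u
  have hkn : k ≤ n := Nat.lt_succ_iff.1 (Finset.mem_range.1 hk)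
  rw [hsup, Real.norm_natCast]
  refine le_trans ?_ (mul_le_mul_of_nonneg_left (Real.le_norm_self _) hc.le)
  rcases lt_or_ge k N with hkN | hkN
  · calc (u k : ℝ) ≤ M := by exact_mod_cast Finset.le_sup (Finset.mem_range.2 hkN)
      _ ≤ c * b n := by rwa [div_le_iff₀' hc] at hMn
  · obtain ⟨huk, hbk, hk₀⟩ := hN k hkN
    calc (u k : ℝ) ≤ c * b k := by
          simpa [Real.norm_of_nonneg hbk] using huk
      _ ≤ c * b n := by
          gcongr
          exact hb_mono hk₀ (hk₀.trans hkn) hkn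

theorem tendsto_natCast_rpow_mul_log_rpow_atTop {a q : ℝ} (ha : 0 < a) (hq : 0 < q) :
    Tendsto (fun n : ℕ => (n : ℝ) ^ a * Real.log n ^ q) atTop atTop :=
  ((tendsto_rpow_atTop ha).comp tendsto_natCast_atTop_atTop).atTop_mul_atTop₀
    ((tendsto_rpow_atTop hq).comp (Real.tendsto_log_atTop.comp tendsto_natCast_atTop_atTop))

theorem monotoneOn_natCast_rpow_mul_log_rpow {a q : ℝ} (ha : 0 ≤ a) (hq : 0 ≤ q) :
    MonotoneOn (fun n : ℕ => (n : ℝ) ^ a * Real.log n ^ q) (Set.Ici 1) := by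
  intro m hm n _ hmn
  have hm' : (0 : ℝ) < m := by exact_mod_cast hm
  dsimp only
  gcongr

namespace NUESystem

variable {X : Type*} [MetricSpace X] [MeasurableSpace X] (sys : NUESystem X)

theorem measurable_F : Measurable sys.F :=
  (measurable_from_prod_countable_left (f := fun p : X × ℕ => sys.f^[p.2] p.1)
    fun j => sys.hfm.iterate j).comp (measurable_id.prodMk sys.hτm)

theorem measurePreserving_F : MeasurePreserving sys.F sys.μY sys.μY :=
  ⟨sys.measurable_F, sys.hμYinv⟩

theorem exists_measure_le_tau_comp_iterate_F : ∃ c : ℝ≥0∞, c ≠ ∞ ∧ ∀ (n : ℕ) (t : ℝ),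
    sys.μY {x | t ≤ sys.τ (sys.F^[n] x)} ≤ c * sys.m {x | t ≤ sys.τ x} := by
  obtain ⟨c, -, hc, hdens⟩ := sys.hμYdens
  refine ⟨c, hc.ne, fun n t => ?_⟩
  have hs : MeasurableSet {x | t ≤ (sys.τ x : ℝ)} :=
    measurableSet_le measurable_const (measurable_from_top.comp sys.hτm)
  calc sys.μY {x | t ≤ sys.τ (sys.F^[n] x)} = sys.μY (sys.F^[n] ⁻¹' {x | t ≤ sys.τ x}) := rfl
    _ = sys.μY {x | t ≤ sys.τ x} :=
      (sys.measurePreserving_F.iterate n).measure_preimage hs.nullMeasurableSet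
    _ ≤ c * sys.m {x | t ≤ sys.τ x} := (hdens _).1

theorem ae_isLittleO_tau_comp_iterate_F {b : ℕ → ℝ} (hb : ∀ n, 0 ≤ b n)
    (h : ∀ δ > 0, Summable fun n => (sys.m {x | δ * b n ≤ sys.τ x}).toReal) :
    ∀ᵐ x ∂sys.μY, (fun n => (sys.τ (sys.F^[n] x) : ℝ)) =o[atTop] b := by
  obtain ⟨c, hc, hle⟩ := sys.exists_measure_le_tau_comp_iterate_F
  have := sys.hmprob
  refine ae_isLittleO_of_tsum_measure_ne_top fun δ hδ => ?_
  simp only [Real.norm_natCast, Real.norm_of_nonneg (hb _)]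
  refine ne_top_of_le_ne_top ?_ (ENNReal.tsum_le_tsum fun n => hle n (δ * b n))
  rw [ENNReal.tsum_mul_left]
  exact ENNReal.mul_ne_top hc
    (ENNReal.tsum_ne_top_of_summable_toReal (fun n => measure_ne_top _ _) (h δ hδ))

variable {sys}

theorem WeakMoment.exists_measure_le {β : ℝ} (hW : sys.WeakMoment β) (hβ : 0 ≤ β) :
    ∃ C, 0 ≤ C ∧ ∀ t : ℝ, 0 < t → sys.m {x | t ≤ sys.τ x} ≤ ENNReal.ofReal (C * t ^ (-β)) := by
  obtain ⟨C, hC, hCn⟩ := hW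
  refine ⟨C, hC.le, fun t ht => ?_⟩
  calc sys.m {x | t ≤ sys.τ x} = sys.m ({x | t ≤ sys.τ x} ∩ sys.Y) :=
        (measure_inter_conull sys.hmY).symm
    _ ≤ sys.m {x | x ∈ sys.Y ∧ ⌈t⌉₊ ≤ sys.τ x} :=
        measure_mono fun x ⟨htx, hY⟩ => ⟨hY, Nat.ceil_le.2 htx⟩
    _ ≤ ENNReal.ofReal (C * (⌈t⌉₊ : ℝ) ^ (-β)) :=
        hCn _ (Nat.one_le_iff_ne_zero.2 (Nat.ceil_pos.2 ht).ne')
    _ ≤ ENNReal.ofReal (C * t ^ (-β)) := ENNReal.ofReal_le_ofReal <|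
        mul_le_mul_of_nonneg_left (Real.rpow_le_rpow_of_nonpos ht (Nat.le_ceil t) (neg_nonpos.2 hβ))
          hC.le

theorem WeakMoment.summable_measure {β ε : ℝ} (hW : sys.WeakMoment β) (hβ : 0 < β) (hε : 0 < ε)
    {δ : ℝ} (hδ : 0 < δ) :
    Summable fun n : ℕ =>
      (sys.m {x | δ * ((n : ℝ) ^ (1 / β) * Real.log n ^ (1 / β + ε)) ≤ sys.τ x}).toReal := by
  obtain ⟨C, hC, hCt⟩ := hW.exists_measure_le hβ.le
  have hpow : ∀ n : ℕ, (δ * ((n : ℝ) ^ (1 / β) * Real.log n ^ (1 / β + ε))) ^ (-β)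
      = δ ^ (-β) * ((n : ℝ) * Real.log n ^ (1 + ε * β))⁻¹ := by
    intro n
    have hlog := Real.log_natCast_nonneg n
    rw [Real.mul_rpow hδ.le (by positivity), Real.mul_rpow (by positivity) (by positivity),
      ← Real.rpow_mul (Nat.cast_nonneg n), ← Real.rpow_mul hlog,
      show 1 / β * -β = -1 by field_simp, show (1 / β + ε) * -β = -(1 + ε * β) by field_simp,
      Real.rpow_neg_one, Real.rpow_neg hlog, mul_inv]
  refine Summable.of_norm_bounded_eventually_nat
    ((Real.summable_inv_mul_log_rpow (p := 1 + ε * β) (by nlinarith)).mul_left (C * δ ^ (-β))) ?_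
  filter_upwards [eventually_ge_atTop 2] with n hn
  have hlog : 0 < Real.log n := Real.log_pos (by exact_mod_cast hn)
  rw [Real.norm_of_nonneg ENNReal.toReal_nonneg, mul_assoc, ← hpow n]
  exact ENNReal.toReal_le_of_le_ofReal (by positivity) (hCt _ (by positivity))

theorem StrongMoment.summable_measure {β : ℝ} (hS : sys.StrongMoment β) (hβ : 0 < β)
    {δ : ℝ} (hδ : 0 < δ) :
    Summable fun n : ℕ => (sys.m {x | δ * (n : ℝ) ^ (1 / β) ≤ sys.τ x}).toReal := by
  set a := ENNReal.ofReal (δ ^ β)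
  have ha : a ≠ 0 := (ENNReal.ofReal_pos.2 (Real.rpow_pos_of_pos hδ β)).ne'
  have hsub : ∀ n : ℕ, {x | δ * ((n + 1 : ℕ) : ℝ) ^ (1 / β) ≤ sys.τ x}
      ⊆ {x | (n + 1) * a ≤ (sys.τ x : ℝ≥0∞) ^ β} := by
    intro n x hx
    have h := Real.rpow_le_rpow (by positivity) hx hβ.le
    rw [Real.mul_rpow hδ.le (by positivity), ← Real.rpow_mul (by positivity),
      one_div_mul_cancel hβ.ne', Real.rpow_one] at h
    calc (n + 1) * a = ENNReal.ofReal (δ ^ β * ((n + 1 : ℕ) : ℝ)) := by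
          rw [ENNReal.ofReal_mul (by positivity), ENNReal.ofReal_natCast, mul_comm]
          push_cast
          rfl
      _ ≤ ENNReal.ofReal ((sys.τ x : ℝ) ^ β) := ENNReal.ofReal_le_ofReal h
      _ = (sys.τ x : ℝ≥0∞) ^ β := by
          rw [← ENNReal.ofReal_rpow_of_nonneg (Nat.cast_nonneg _) hβ.le, ENNReal.ofReal_natCast]
  have hlayer := tsum_mul_measure_succ_mul_le_le_lintegral sys.m
    (g := fun x => (sys.τ x : ℝ≥0∞) ^ β) ((measurable_from_top.comp sys.hτm).pow_const β) a
  rw [ENNReal.tsum_mul_left] at hlayer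
  have htsum : ∑' n : ℕ, sys.m {x | δ * ((n + 1 : ℕ) : ℝ) ^ (1 / β) ≤ sys.τ x} ≠ ∞ :=
    ne_top_of_le_ne_top (ENNReal.lt_top_of_mul_ne_top_right (hlayer.trans_lt hS).ne ha).ne
      (ENNReal.tsum_le_tsum fun n => measure_mono (hsub n))
  exact (summable_nat_add_iff 1).1 (ENNReal.summable_toReal htsum)

end NUESystem

theorem max_return_time_growth_general {X : Type*} [MetricSpace X] [MeasurableSpace X]
    (sys : NUESystem X) (β : ℝ) (hβ : 0 < β) :
    (sys.WeakMoment β → ∀ ε : ℝ, 0 < ε →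
      ∀ᵐ x ∂sys.μY,
        (fun n : ℕ => ((((Finset.range (n + 1)).sup fun k => sys.τ (sys.F^[k] x) : ℕ)) : ℝ))
          =o[atTop] fun n => (n : ℝ) ^ (1 / β) * (Real.log n) ^ (1 / β + ε)) ∧
    (sys.StrongMoment β →
      ∀ᵐ x ∂sys.μY,
        (fun n : ℕ => ((((Finset.range (n + 1)).sup fun k => sys.τ (sys.F^[k] x) : ℕ)) : ℝ))
          =o[atTop] fun n => (n : ℝ) ^ (1 / β)) := by
  have hβ' : 0 < 1 / β := one_div_pos.2 hβ
  refine ⟨fun hW ε hε => ?_, fun hS => ?_⟩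
  · filter_upwards [sys.ae_isLittleO_tau_comp_iterate_F (fun n => by positivity)
      fun δ hδ => hW.summable_measure hβ hε hδ] with x hx
    exact hx.sup_range (tendsto_natCast_rpow_mul_log_rpow_atTop hβ' (by positivity))
      (monotoneOn_natCast_rpow_mul_log_rpow hβ'.le (by positivity))
  · filter_upwards [sys.ae_isLittleO_tau_comp_iterate_F (fun n => by positivity)
      fun δ hδ => hS.summable_measure hβ hδ] with x hx
    exact hx.sup_range ((tendsto_rpow_atTop hβ').comp tendsto_natCast_atTop_atTop)
      (n₀ := 0) fun m _ n _ hmn =>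
        Real.rpow_le_rpow (Nat.cast_nonneg m) (by exact_mod_cast hmn) hβ'.le

/-- **Growth of returns along orbits of the induced map** (Proposition 4.4).
If the return times of `f` have a weak polynomial moment of order `β`, then
`μ_Y`-almost surely `max_{k ≤ n} τ(F^k x) = o(n^{1/β} (log n)^{1/β+ε})` for every
`ε > 0`; with a strong polynomial moment of order `β`,
`max_{k ≤ n} τ(F^k x) = o(n^{1/β})` almost surely. -/
theorem max_return_time_growth {X : Type*} [MetricSpace X] [MeasurableSpace X]
    [BorelSpace X] [CompleteSpace X] [TopologicalSpace.SeparableSpace X]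
    (hbd : Bornology.IsBounded (Set.univ : Set X))
    (sys : NUESystem X) (β : ℝ) (hβ : 0 < β) :
    (sys.WeakMoment β → ∀ ε : ℝ, 0 < ε →
      ∀ᵐ x ∂sys.μY,
        (fun n : ℕ => ((((Finset.range (n + 1)).sup fun k => sys.τ (sys.F^[k] x) : ℕ)) : ℝ))
          =o[atTop] fun n => (n : ℝ) ^ (1 / β) * (Real.log n) ^ (1 / β + ε)) ∧
    (sys.StrongMoment β →
      ∀ᵐ x ∂sys.μY,
        (fun n : ℕ => ((((Finset.range (n + 1)).sup fun k => sys.τ (sys.F^[k] x) : ℕ)) : ℝ))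
          =o[atTop] fun n => (n : ℝ) ^ (1 / β)) :=
  max_return_time_growth_general sys β hβ
end

section
/- On (Y, μ_Y), if m(τ ≥ n) ≥ κ n^{−β} for all n ≥ 1 and some β > 2, κ > 0, and if there are constants c > 0, C > 0 and θ ∈ (0,1) such that μ_Y(τ∘F^n = k) ≥ c·m(τ = k) for all n,k ≥ 0 and |μ_Y(A_k ∩ A_n) − μ_Y(A_k)μ_Y(A_n)| ≤ C θ^{|n−k|} μ_Y(A_k)μ_Y(A_n) for A_n = {τ∘F^n ≥ (n log n)^{1/β}}, then μ_Y-almost surely τ∘F^n ≥ (n log n)^{1/β} for infinitely many n. -/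
open MeasureTheory ProbabilityTheory Filter Asymptotics
open scoped ENNReal NNReal

/-- The event `A_n = {x ∈ Y : τ(Fⁿ x) ≥ (n log n)^{1/β}}`. -/
def NUESystem.bigReturn {X : Type*} [MetricSpace X] [MeasurableSpace X]
    (sys : NUESystem X) (β : ℝ) (n : ℕ) : Set X :=
  {x | x ∈ sys.Y ∧ ((n : ℝ) * Real.log n) ^ (1 / β) ≤ (sys.τ (sys.F^[n] x) : ℝ)}

/-!
The events `A_n` are quasi-independent, so the second Borel–Cantelli lemma survives in its
Kochen–Stone form. Summing the domination hypothesis over `k ≥ (n log n)^{1/β}` and using the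
lower tail bound gives `μ_Y(A_n) ≳ 1/(n log n)`, hence `∑ μ_Y(A_n) = ∞`. Exponential mixing bounds
`∑_{n,k ∈ I} μ_Y(A_n ∩ A_k)` by `s_I² + K s_I`, where `s_I = ∑_{n ∈ I} μ_Y(A_n)`, and the
Chung–Erdős inequality `s_I² ≤ (∑_{n,k ∈ I} μ_Y(A_n ∩ A_k)) μ_Y(⋃_{n ∈ I} A_n)` then forces every
tail union `⋃_{n ≥ M} A_n` to have full measure.
-/

section

open Finset

theorem Real.not_summable_inv_natCast_mul_log :
    ¬ Summable (fun n : ℕ => ((n : ℝ) * Real.log n)⁻¹) := by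
  have hmono : ∀ᶠ k : ℕ in atTop,
      ((k + 1 : ℕ) * Real.log (k + 1 : ℕ) : ℝ)⁻¹ ≤ ((k : ℝ) * Real.log k)⁻¹ := by
    filter_upwards [eventually_ge_atTop 2] with k hk
    have hk' : (2 : ℝ) ≤ k := by exact_mod_cast hk
    have hlog : 0 < Real.log k := Real.log_pos (by linarith)
    gcongr <;> omega
  rw [← summable_condensed_iff_of_eventually_nonneg
    (Eventually.of_forall fun n => by positivity) hmono]
  have hcond : (fun k : ℕ => (2 : ℝ) ^ k * (((2 ^ k : ℕ) : ℝ) * Real.log (2 ^ k : ℕ))⁻¹)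
      = fun k : ℕ => (Real.log 2)⁻¹ * (k : ℝ)⁻¹ := by
    ext k
    push_cast
    rw [Real.log_pow]
    field_simp
  rw [hcond, summable_mul_left_iff (inv_ne_zero (Real.log_pos one_lt_two).ne')]
  exact Real.not_summable_natCast_inv

theorem not_summable_of_eventually_inv_mul_log_le {p : ℕ → ℝ} {ε : ℝ} (hε : 0 < ε)
    (h : ∀ᶠ n : ℕ in atTop, ε * ((n : ℝ) * Real.log n)⁻¹ ≤ p n) : ¬ Summable p := fun hp => by
  refine Real.not_summable_inv_natCast_mul_log ((summable_mul_left_iff hε.ne').1 ?_)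
  refine hp.of_norm_bounded_eventually_nat (h.mono fun n hn => ?_)
  rwa [Real.norm_of_nonneg (by positivity)]

theorem two_rpow_neg_mul_inv_le_natCeil_rpow_neg {L β : ℝ} (hL : 1 ≤ L) (hβ : 0 < β) :
    2 ^ (-β) * L⁻¹ ≤ (⌈L ^ (1 / β)⌉₊ : ℝ) ^ (-β) := by
  have ha : 1 ≤ L ^ (1 / β) := Real.one_le_rpow hL (by positivity)
  calc 2 ^ (-β) * L⁻¹ = (2 * L ^ (1 / β)) ^ (-β) := by
        rw [Real.mul_rpow zero_le_two (by positivity), ← Real.rpow_mul (by positivity),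
          one_div_mul_eq_div, neg_div, div_self hβ.ne', Real.rpow_neg_one]
    _ ≤ (⌈L ^ (1 / β)⌉₊ : ℝ) ^ (-β) :=
        Real.rpow_le_rpow_of_nonpos (by positivity) (Nat.ceil_le_two_mul (by linarith))
          (by linarith)

theorem sum_pow_natAbs_sub_le {θ : ℝ} (hθ₀ : 0 ≤ θ) (hθ₁ : θ < 1) (I : Finset ℕ) (n : ℕ) :
    ∑ k ∈ I, θ ^ ((n : ℤ) - k).natAbs ≤ 2 * (1 - θ)⁻¹ := by
  have hinj : ∀ s : Finset ℕ, Set.InjOn (fun k : ℕ => ((n : ℤ) - k).natAbs) s →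
      ∑ k ∈ s, θ ^ ((n : ℤ) - k).natAbs ≤ (1 - θ)⁻¹ := fun s hs => by
    rw [← Finset.sum_image hs, ← tsum_geometric_of_lt_one hθ₀ hθ₁]
    exact (summable_geometric_of_lt_one hθ₀ hθ₁).sum_le_tsum _ fun j _ => by positivity
  rw [← Finset.sum_filter_add_sum_filter_not I (· ≤ n), two_mul]
  gcongr <;> apply hinj <;> intro a ha b hb hab <;>
    simp only [coe_filter, Set.mem_ofPred_eq] at ha hb hab <;> omega

theorem sum_sum_le_sq_add_mul_of_le_mul_add_pow {p : ℕ → ℝ} {q : ℕ → ℕ → ℝ} {D θ : ℝ}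
    (hp : ∀ n, 0 ≤ p n) (hD : 0 ≤ D) (hθ₀ : 0 ≤ θ) (hθ₁ : θ < 1)
    (hq : ∀ n k, q n k ≤ p n * p k + D * θ ^ ((n : ℤ) - k).natAbs * p n) (I : Finset ℕ) :
    ∑ n ∈ I, ∑ k ∈ I, q n k ≤ (∑ n ∈ I, p n) ^ 2 + 2 * D * (1 - θ)⁻¹ * ∑ n ∈ I, p n := by
  have hrow : ∀ n, ∑ k ∈ I, q n k ≤ p n * ∑ k ∈ I, p k + 2 * D * (1 - θ)⁻¹ * p n := fun n =>
    calc ∑ k ∈ I, q n k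
        ≤ ∑ k ∈ I, (p n * p k + D * θ ^ ((n : ℤ) - k).natAbs * p n) :=
          sum_le_sum fun k _ => hq n k
      _ = p n * ∑ k ∈ I, p k + D * p n * ∑ k ∈ I, θ ^ ((n : ℤ) - k).natAbs := by
        rw [sum_add_distrib, mul_sum, mul_sum]
        congr 1
        exact sum_congr rfl fun k _ => by ring
      _ ≤ p n * ∑ k ∈ I, p k + D * p n * (2 * (1 - θ)⁻¹) := by
        gcongr
        · exact mul_nonneg hD (hp n)
        · exact sum_pow_natAbs_sub_le hθ₀ hθ₁ I n
      _ = _ := by ring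
  calc ∑ n ∈ I, ∑ k ∈ I, q n k
      ≤ ∑ n ∈ I, (p n * ∑ k ∈ I, p k + 2 * D * (1 - θ)⁻¹ * p n) :=
        sum_le_sum fun n _ => hrow n
    _ = _ := by rw [sum_add_distrib, ← sum_mul, ← mul_sum, sq]

theorem one_le_of_tendsto_atTop_of_sq_le {s : ℕ → ℝ} (hs : Tendsto s atTop atTop) {K u : ℝ}
    (h : ∀ N, s N ^ 2 ≤ (s N ^ 2 + K * s N) * u) : 1 ≤ u := by
  by_contra! hu
  obtain ⟨N, hN₀, hNK⟩ := ((hs.eventually_gt_atTop 0).and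
    (hs.eventually_gt_atTop (K * u / (1 - u)))).exists
  rw [div_lt_iff₀ (by linarith)] at hNK
  nlinarith [h N]

theorem sq_sum_measure_le_sum_measure_inter_mul {Ω ι : Type*} [MeasurableSpace Ω] (μ : Measure Ω)
    {A : ι → Set Ω} (hA : ∀ i, MeasurableSet (A i)) (I : Finset ι) :
    (∑ i ∈ I, μ (A i)) ^ 2 ≤ (∑ i ∈ I, ∑ j ∈ I, μ (A i ∩ A j)) * μ (⋃ i ∈ I, A i) := by
  set U := ⋃ i ∈ I, A i
  set f : Ω → ℝ≥0∞ := fun x => ∑ i ∈ I, (A i).indicator 1 x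
  have hA1 : ∀ i, Measurable ((A i).indicator (1 : Ω → ℝ≥0∞)) :=
    fun i => measurable_one.indicator (hA i)
  have hAA1 : ∀ i j, Measurable ((A i ∩ A j).indicator (1 : Ω → ℝ≥0∞)) :=
    fun i j => measurable_one.indicator ((hA i).inter (hA j))
  have hf : Measurable f := Finset.measurable_sum I fun i _ => hA1 i
  have hU : MeasurableSet U := I.measurableSet_biUnion fun i _ => hA i
  have hfU : f * U.indicator 1 = f := by
    ext x
    by_cases hx : x ∈ U
    · simp [hx]
    · have : ∀ i ∈ I, x ∉ A i := fun i hi hxi => hx (Set.mem_biUnion hi hxi)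
      simp +contextual [hx, f, this]
  have hf1 : ∫⁻ x, f x ∂μ = ∑ i ∈ I, μ (A i) := by
    rw [lintegral_finsetSum _ fun i _ => hA1 i]
    simp [lintegral_indicator_one (hA _)]
  have hf2 : ∫⁻ x, f x ^ (2 : ℝ) ∂μ = ∑ i ∈ I, ∑ j ∈ I, μ (A i ∩ A j) := by
    have hsq : ∀ x, f x ^ (2 : ℝ) = ∑ i ∈ I, ∑ j ∈ I, (A i ∩ A j).indicator 1 x := fun x => by
      simp [f, sq, Finset.sum_mul_sum, Set.inter_indicator_one]
    simp_rw [hsq]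
    rw [lintegral_finsetSum _ fun i _ => Finset.measurable_sum _ fun j _ => hAA1 i j]
    refine Finset.sum_congr rfl fun i _ => ?_
    rw [lintegral_finsetSum _ fun j _ => hAA1 i j]
    simp [lintegral_indicator_one ((hA i).inter (hA _))]
  have hU2 : ∫⁻ x, U.indicator 1 x ^ (2 : ℝ) ∂μ = μ U := by
    rw [← lintegral_indicator_one hU]
    congr 1 with x
    by_cases hx : x ∈ U <;> simp [hx]
  have hcs := ENNReal.lintegral_mul_le_Lp_mul_Lq μ Real.HolderConjugate.two_two
    hf.aemeasurable (measurable_one.indicator hU).aemeasurable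
  rw [hfU, hf1, hf2, hU2] at hcs
  calc (∑ i ∈ I, μ (A i)) ^ 2
      ≤ ((∑ i ∈ I, ∑ j ∈ I, μ (A i ∩ A j)) ^ (1 / 2 : ℝ) * μ U ^ (1 / 2 : ℝ)) ^ 2 := by
        gcongr
    _ = (∑ i ∈ I, ∑ j ∈ I, μ (A i ∩ A j)) * μ U := by
        rw [mul_pow, ← ENNReal.rpow_natCast, ← ENNReal.rpow_natCast, ← ENNReal.rpow_mul,
          ← ENNReal.rpow_mul]
        norm_num

theorem sq_sum_measureReal_le_sum_measureReal_inter_mul {Ω ι : Type*} [MeasurableSpace Ω]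
    (μ : Measure Ω) [IsFiniteMeasure μ] {A : ι → Set Ω} (hA : ∀ i, MeasurableSet (A i))
    (I : Finset ι) :
    (∑ i ∈ I, μ.real (A i)) ^ 2
      ≤ (∑ i ∈ I, ∑ j ∈ I, μ.real (A i ∩ A j)) * μ.real (⋃ i ∈ I, A i) := by
  have h := ENNReal.toReal_mono
    (ENNReal.mul_ne_top (by simp [measure_ne_top]) (measure_ne_top _ _))
    (sq_sum_measure_le_sum_measure_inter_mul μ hA I)
  simpa [ENNReal.toReal_sum, measureReal_def] using h

theorem ae_frequently_mem_of_not_summable_of_sum_inter_le {Ω : Type*} [MeasurableSpace Ω]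
    {μ : Measure Ω} [IsProbabilityMeasure μ] {A : ℕ → Set Ω} (hA : ∀ n, MeasurableSet (A n))
    (hdiv : ¬ Summable fun n => μ.real (A n)) {K : ℝ}
    (hK : ∀ I : Finset ℕ, ∑ n ∈ I, ∑ k ∈ I, μ.real (A n ∩ A k)
      ≤ (∑ n ∈ I, μ.real (A n)) ^ 2 + K * ∑ n ∈ I, μ.real (A n)) :
    ∀ᵐ x ∂μ, ∃ᶠ n in atTop, x ∈ A n := by
  have htail : ∀ M, μ (⋃ n ≥ M, A n) = 1 := fun M => by
    set s : ℕ → ℝ := fun N => ∑ n ∈ Ico M (M + N), μ.real (A n)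
    have hs : Tendsto s atTop atTop := by
      simp only [s, sum_Ico_eq_sum_range, add_tsub_cancel_left]
      refine (not_summable_iff_tendsto_nat_atTop_of_nonneg fun _ => measureReal_nonneg).1 ?_
      simpa only [add_comm M] using mt (summable_nat_add_iff M).1 hdiv
    have hsu : ∀ N, s N ^ 2 ≤ (s N ^ 2 + K * s N) * μ.real (⋃ n ≥ M, A n) := fun N =>
      (sq_sum_measureReal_le_sum_measureReal_inter_mul μ hA _).trans <|
        mul_le_mul (hK _) (measureReal_mono (fun x hx => by
            obtain ⟨n, hn, hxn⟩ := Set.mem_iUnion₂.1 hx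
            exact Set.mem_iUnion₂.2 ⟨n, (mem_Ico.1 hn).1, hxn⟩) (measure_ne_top _ _))
          measureReal_nonneg
          ((sum_nonneg fun _ _ => sum_nonneg fun _ _ => measureReal_nonneg).trans (hK _))
    rw [← ofReal_measureReal (measure_ne_top _ _), le_antisymm measureReal_le_one
      (one_le_of_tendsto_atTop_of_sq_le hs hsu), ENNReal.ofReal_one]
  filter_upwards [ae_all_iff.2 fun M => (mem_ae_iff_prob_eq_one
    (MeasurableSet.iUnion fun n => MeasurableSet.iUnion fun _ => hA n)).2 (htail M)] with x hx
  refine frequently_atTop.2 fun M => ?_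
  obtain ⟨n, hn, hxn⟩ := Set.mem_iUnion₂.1 (hx M)
  exact ⟨n, hn, hxn⟩

theorem measure_preimage_le_of_forall_preimage_singleton_le {α : Type*} [MeasurableSpace α]
    {μ ν : Measure α} {f g : α → ℕ} (hf : Measurable f) (hg : Measurable g)
    (h : ∀ k, ν (f ⁻¹' {k}) ≤ μ (g ⁻¹' {k})) (s : Set ℕ) : ν (f ⁻¹' s) ≤ μ (g ⁻¹' s) := by
  rw [← tsum_measure_preimage_singleton s.to_countable fun k _ => hf (measurableSet_singleton k),
    ← tsum_measure_preimage_singleton s.to_countable fun k _ => hg (measurableSet_singleton k)]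
  exact ENNReal.tsum_le_tsum fun k => h k

end

theorem NUESystem.measurable_F_s17 {X : Type*} [MetricSpace X] [MeasurableSpace X]
    (sys : NUESystem X) : Measurable sys.F :=
  (measurable_from_prod_countable_left fun n => sys.hfm.iterate n :
      Measurable fun p : X × ℕ => sys.f^[p.2] p.1).comp (measurable_id.prodMk sys.hτm)

theorem NUESystem.measurableSet_bigReturn {X : Type*} [MetricSpace X] [MeasurableSpace X]
    [BorelSpace X] (sys : NUESystem X) (β : ℝ) (n : ℕ) : MeasurableSet (sys.bigReturn β n) := by
  have h : Measurable fun x => (sys.τ (sys.F^[n] x) : ℝ) :=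
    measurable_from_nat.comp (sys.hτm.comp (sys.measurable_F_s17.iterate n))
  exact sys.hYclosed.measurableSet.inter (measurableSet_le measurable_const h)

theorem NUESystem.ofReal_mul_measure_le_measure_bigReturn {X : Type*} [MetricSpace X]
    [MeasurableSpace X] (sys : NUESystem X) {β c : ℝ} {n N : ℕ}
    (hdom : ∀ k : ℕ, ENNReal.ofReal c * sys.m {x | x ∈ sys.Y ∧ sys.τ x = k}
        ≤ sys.μY {x | sys.τ (sys.F^[n] x) = k})
    (hN : ((n : ℝ) * Real.log n) ^ (1 / β) ≤ N) :
    ENNReal.ofReal c * sys.m {x | x ∈ sys.Y ∧ N ≤ sys.τ x} ≤ sys.μY (sys.bigReturn β n) := by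
  calc ENNReal.ofReal c * sys.m {x | x ∈ sys.Y ∧ N ≤ sys.τ x}
      = (ENNReal.ofReal c • sys.m.restrict sys.Y) (sys.τ ⁻¹' Set.Ici N) := by
        rw [Measure.smul_apply, Measure.restrict_apply (sys.hτm measurableSet_Ici), smul_eq_mul,
          Set.inter_comm]; rfl
    _ ≤ sys.μY ((fun x => sys.τ (sys.F^[n] x)) ⁻¹' Set.Ici N) := by
        refine measure_preimage_le_of_forall_preimage_singleton_le sys.hτm
          (sys.hτm.comp (sys.measurable_F_s17.iterate n)) (fun k => ?_) _
        rw [Measure.smul_apply, Measure.restrict_apply (sys.hτm (measurableSet_singleton k)),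
          smul_eq_mul, Set.inter_comm]
        exact hdom k
    _ = sys.μY ((fun x => sys.τ (sys.F^[n] x)) ⁻¹' Set.Ici N ∩ sys.Y) :=
        (measure_inter_conull sys.hμYsupp).symm
    _ ≤ sys.μY (sys.bigReturn β n) := measure_mono fun x ⟨hxN, hxY⟩ =>
        ⟨hxY, hN.trans (by exact_mod_cast hxN)⟩

theorem NUESystem.mul_inv_mul_log_le_measureReal_bigReturn {X : Type*} [MetricSpace X]
    [MeasurableSpace X] (sys : NUESystem X) {β κ' c : ℝ} (hβ : 0 < β) (hκ' : 0 ≤ κ')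
    (hc : 0 ≤ c)
    (hlower : ∀ n : ℕ, 1 ≤ n →
      ENNReal.ofReal (κ' * (n : ℝ) ^ (-β)) ≤ sys.m {x | x ∈ sys.Y ∧ n ≤ sys.τ x})
    {n : ℕ} (hdom : ∀ k : ℕ, ENNReal.ofReal c * sys.m {x | x ∈ sys.Y ∧ sys.τ x = k}
        ≤ sys.μY {x | sys.τ (sys.F^[n] x) = k})
    (hn : 3 ≤ n) :
    c * κ' * 2 ^ (-β) * ((n : ℝ) * Real.log n)⁻¹ ≤ sys.μY.real (sys.bigReturn β n) := by
  have := sys.hμYprob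
  set L := (n : ℝ) * Real.log n
  have hL : 1 ≤ L := by
    have hn' : (3 : ℝ) ≤ n := by exact_mod_cast hn
    have : 1 ≤ Real.log n := by
      rw [Real.le_log_iff_exp_le (by linarith)]
      linarith [Real.exp_one_lt_d9]
    nlinarith
  set N := ⌈L ^ (1 / β)⌉₊
  have hN : 1 ≤ N :=
    Nat.one_le_ceil_iff.2 (by linarith [Real.one_le_rpow hL (by positivity : 0 ≤ 1 / β)])
  rw [measureReal_def, ← ENNReal.ofReal_le_iff_le_toReal (measure_ne_top _ _)]
  calc ENNReal.ofReal (c * κ' * 2 ^ (-β) * L⁻¹)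
      ≤ ENNReal.ofReal c * ENNReal.ofReal (κ' * (N : ℝ) ^ (-β)) := by
        rw [← ENNReal.ofReal_mul hc, mul_assoc, mul_assoc]
        gcongr
        exact two_rpow_neg_mul_inv_le_natCeil_rpow_neg hL hβ
    _ ≤ ENNReal.ofReal c * sys.m {x | x ∈ sys.Y ∧ N ≤ sys.τ x} := by gcongr; exact hlower N hN
    _ ≤ sys.μY (sys.bigReturn β n) :=
        sys.ofReal_mul_measure_le_measure_bigReturn hdom (Nat.le_ceil _)

theorem large_returns_infinitely_often_general {X : Type*} [MetricSpace X] [MeasurableSpace X]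
    [BorelSpace X]
    (sys : NUESystem X) (β : ℝ) (hβ : 2 < β)
    (κ' : ℝ) (hκ' : 0 < κ')
    (hlower : ∀ n : ℕ, 1 ≤ n →
      ENNReal.ofReal (κ' * (n : ℝ) ^ (-β)) ≤ sys.m {x | x ∈ sys.Y ∧ n ≤ sys.τ x})
    (c : ℝ) (hc : 0 < c)
    (hdom : ∀ n k : ℕ,
      ENNReal.ofReal c * sys.m {x | x ∈ sys.Y ∧ sys.τ x = k}
        ≤ sys.μY {x | sys.τ (sys.F^[n] x) = k})
    (C θ : ℝ) (hC : 0 < C) (hθ : θ ∈ Set.Ioo (0 : ℝ) 1)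
    (hmix : ∀ n k : ℕ, n ≠ k →
      |(sys.μY (sys.bigReturn β k ∩ sys.bigReturn β n)).toReal
          - (sys.μY (sys.bigReturn β k)).toReal * (sys.μY (sys.bigReturn β n)).toReal|
        ≤ C * θ ^ (((n : ℤ) - (k : ℤ)).natAbs) *
            (sys.μY (sys.bigReturn β k)).toReal * (sys.μY (sys.bigReturn β n)).toReal) :
    ∀ᵐ x ∂sys.μY, ∃ᶠ n : ℕ in atTop,
      ((n : ℝ) * Real.log n) ^ (1 / β) ≤ (sys.τ (sys.F^[n] x) : ℝ) := by
  have := sys.hμYprob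
  set A := sys.bigReturn β
  set p : ℕ → ℝ := fun n => sys.μY.real (A n)
  have hp : ∀ n, 0 ≤ p n := fun n => measureReal_nonneg
  have hdiv : ¬ Summable p :=
    not_summable_of_eventually_inv_mul_log_le (by positivity) <|
      (eventually_ge_atTop 3).mono fun n hn =>
        sys.mul_inv_mul_log_le_measureReal_bigReturn (by linarith) hκ'.le hc.le hlower (hdom n) hn
  -- Raising `C` to `C + 1` absorbs the diagonal terms `μ_Y(A_n ∩ A_n) = μ_Y(A_n)`.
  have hpair : ∀ n k, sys.μY.real (A n ∩ A k)
      ≤ p n * p k + (C + 1) * θ ^ ((n : ℤ) - k).natAbs * p n := by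
    intro n k
    rcases eq_or_ne n k with rfl | hnk
    · simp only [Set.inter_self, sub_self, Int.natAbs_zero, pow_zero, mul_one]
      nlinarith [hp n]
    · have hmix' : sys.μY.real (A n ∩ A k)
          ≤ p n * p k + C * θ ^ ((n : ℤ) - k).natAbs * p n * p k := by
        have h := (abs_le.1 (hmix k n hnk.symm)).2
        rw [show ((k : ℤ) - n).natAbs = ((n : ℤ) - k).natAbs by omega] at h
        simp only [p, measureReal_def]
        linarith
      have hpk : p k ≤ 1 := measureReal_le_one
      have hθpow : 0 ≤ θ ^ ((n : ℤ) - k).natAbs := pow_nonneg hθ.1.le _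
      nlinarith [hp n, mul_nonneg (mul_nonneg hC.le hθpow) (hp n)]
  filter_upwards [ae_frequently_mem_of_not_summable_of_sum_inter_le
    (sys.measurableSet_bigReturn β) hdiv
    (sum_sum_le_sq_add_mul_of_le_mul_add_pow hp (by linarith) hθ.1.le hθ.2 hpair)] with x hx
  exact hx.mono fun n hn => hn.2

/-- **Borel–Cantelli lower bound for large returns** (from the proof of
Proposition 4.5). If `m(τ ≥ n) ≥ κ' n^{-β}` with `β > 2`, returns dominate the
reference measure along the orbit (`μ_Y(τ∘Fⁿ = k) ≥ c·m(τ = k)`), and the events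
`A_n = {τ∘Fⁿ ≥ (n log n)^{1/β}}` are exponentially mixing, then `μ_Y`-almost surely
`τ(Fⁿ x) ≥ (n log n)^{1/β}` for infinitely many `n`. -/
theorem large_returns_infinitely_often {X : Type*} [MetricSpace X] [MeasurableSpace X]
    [BorelSpace X] [CompleteSpace X] [TopologicalSpace.SeparableSpace X]
    (hbd : Bornology.IsBounded (Set.univ : Set X))
    (sys : NUESystem X) (β : ℝ) (hβ : 2 < β)
    (κ' : ℝ) (hκ' : 0 < κ')
    (hlower : ∀ n : ℕ, 1 ≤ n →
      ENNReal.ofReal (κ' * (n : ℝ) ^ (-β)) ≤ sys.m {x | x ∈ sys.Y ∧ n ≤ sys.τ x})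
    (c : ℝ) (hc : 0 < c)
    (hdom : ∀ n k : ℕ,
      ENNReal.ofReal c * sys.m {x | x ∈ sys.Y ∧ sys.τ x = k}
        ≤ sys.μY {x | sys.τ (sys.F^[n] x) = k})
    (C θ : ℝ) (hC : 0 < C) (hθ : θ ∈ Set.Ioo (0 : ℝ) 1)
    (hmix : ∀ n k : ℕ, n ≠ k →
      |(sys.μY (sys.bigReturn β k ∩ sys.bigReturn β n)).toReal
          - (sys.μY (sys.bigReturn β k)).toReal * (sys.μY (sys.bigReturn β n)).toReal|
        ≤ C * θ ^ (((n : ℤ) - (k : ℤ)).natAbs) *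
            (sys.μY (sys.bigReturn β k)).toReal * (sys.μY (sys.bigReturn β n)).toReal) :
    ∀ᵐ x ∂sys.μY, ∃ᶠ n : ℕ in atTop,
      ((n : ℝ) * Real.log n) ^ (1 / β) ≤ (sys.τ (sys.F^[n] x) : ℝ) :=
  large_returns_infinitely_often_general sys β hβ κ' hκ' hlower c hc hdom C θ hC hθ hmix
end
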